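/- arXiv:2412.01489 — 3 statements merged into one kernel-verified Lean document; each statement's English description precedes it below -/
import Mathlib

section
/- Fix a finite connected weighted graph G, positive site weights α̂, and integers m ≤ k with k ≥ 2. Define ς_{α̂,k,m}(η) = ∏_{x∈V : η_x > 0} (α̂_x / η_x) for η ∈ Ω_{k,m}, and the metastable rates r^M(η,ξ) = Σ_{ζ∈Ξ_k} r^A(η,ζ)·lim_{t→∞}(e^{tB_k}1_ξ)(ζ) for ξ ≠ η in Ω_k. Then detailed balance holds within each stack-number level: for all η, ξ ∈ Ω_{k,m}, ς_{α̂,k,m}(η)·r^M(η,ξ) = ς_{α̂,k,m}(ξ)·r^M(ξ,η); equivalently, the restriction M_{α̂,k,m} of the metastable generator to Ω_{k,m} is self-adjoint on L²(ς_{α̂,k,m}). -/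
open scoped BigOperators Classical

noncomputable section

/-- The configuration space of `k` particles on the finite site set `V`. -/
def Config (V : Type*) [Fintype V] (k : ℕ) : Type _ :=
  {η : V → ℕ // ∑ x, η x = k}

namespace Config

variable {V : Type*} [Fintype V] [DecidableEq V] {k : ℕ}

lemma apply_le (η : Config V k) (x : V) : η.1 x ≤ k := by
  have h := Finset.single_le_sum (f := η.1) (fun i _ => Nat.zero_le _) (Finset.mem_univ x)
  simpa [η.2] using h

instance instFintype : Fintype (Config V k) :=
  Fintype.ofInjective
    (fun η : Config V k => (fun x => (⟨η.1 x, Nat.lt_succ_of_le (η.apply_le x)⟩ : Fin (k+1))))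
    (fun a b hab => Subtype.ext (funext fun x => congrArg Fin.val (congrFun hab x)))

/-- The configuration `η - δ_x + δ_y` (move a particle from `x` to `y`);
by convention it is `η` itself when `η` has no particle at `x`. -/
def move (η : Config V k) (x y : V) : Config V k :=
  if h : η.1 x = 0 then η else
    ⟨fun z => η.1 z - (if z = x then 1 else 0) + (if z = y then 1 else 0), by
      have hle : ∀ z : V, (if z = x then 1 else 0) ≤ η.1 z := fun z => by
        by_cases hz : z = x
        · simpa [hz] using Nat.one_le_iff_ne_zero.2 h
        · simp [hz]
      have cast_term : ∀ z : V,
          ((η.1 z - (if z = x then 1 else 0) + (if z = y then 1 else 0) : ℕ) : ℤ)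
            = (η.1 z : ℤ) - (if z = x then 1 else 0) + (if z = y then 1 else 0) := by
        intro z
        rw [Nat.cast_add, Nat.cast_sub (hle z)]
        by_cases hz : z = x <;> by_cases hz' : z = y <;> simp [hz, hz']
      have key : ((∑ z, (η.1 z - (if z = x then 1 else 0) + (if z = y then 1 else 0)) : ℕ) : ℤ)
          = (k : ℤ) := by
        rw [Nat.cast_sum]
        rw [Finset.sum_congr rfl (fun z _ => cast_term z)]
        rw [Finset.sum_add_distrib, Finset.sum_sub_distrib]
        have h1 : (∑ z, (η.1 z : ℤ)) = (k : ℤ) := by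
          rw [← Nat.cast_sum, η.2]
        rw [h1]
        simp
      exact_mod_cast key⟩

/-- The configuration `η + δ_x`. -/
def addOne (η : Config V k) (x : V) : Config V (k + 1) :=
  ⟨fun z => η.1 z + (if z = x then 1 else 0), by
    rw [Finset.sum_add_distrib, η.2]
    simp⟩

end Config

section Defs

variable {V : Type*} [Fintype V] [DecidableEq V]

/-- The configuration with `k` particles stacked at `x`. -/
def stackConfig (V : Type*) [Fintype V] [DecidableEq V] (k : ℕ) (x : V) : Config V k :=
  ⟨fun z => if z = x then k else 0, by simp⟩

/-- Normalization constant `Z_{α,k}`. -/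
def sipZ (α : V → ℝ) (k : ℕ) : ℝ :=
  Real.Gamma ((∑ x, α x) + k) / (Real.Gamma (∑ x, α x) * (Nat.factorial k))

/-- The reversible (Dirichlet-multinomial) measure `μ_{α,k}` of SIP. -/
def sipMeasure (α : V → ℝ) {k : ℕ} (η : Config V k) : ℝ :=
  (sipZ α k)⁻¹ * ∏ x, Real.Gamma (α x + η.1 x) / (Real.Gamma (α x) * (Nat.factorial (η.1 x)))

/-- The Dirichlet form of `SIP_k(G, α)`. -/
def dirichletForm (c : V → V → ℝ) (α : V → ℝ) {k : ℕ} (f : Config V k → ℝ) : ℝ :=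
  (1 / 2) * ∑ η : Config V k, ∑ x, ∑ y,
    sipMeasure α η * (c x y * η.1 x * (α y + η.1 y) * (f (η.move x y) - f η) ^ 2)

/-- Mean of `f` under `μ_{α,k}`. -/
def sipMean (α : V → ℝ) {k : ℕ} (f : Config V k → ℝ) : ℝ :=
  ∑ η : Config V k, sipMeasure α η * f η

/-- Variance of `f` under `μ_{α,k}`. -/
def sipVar (α : V → ℝ) {k : ℕ} (f : Config V k → ℝ) : ℝ :=
  ∑ η : Config V k, sipMeasure α η * (f η - sipMean α f) ^ 2

/-- Squared `L²(μ_{α,k})`-norm of `f`. -/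
def sipNormSq (α : V → ℝ) {k : ℕ} (f : Config V k → ℝ) : ℝ :=
  ∑ η : Config V k, sipMeasure α η * (f η) ^ 2

/-- The spectral gap `gap_k(G,α)` of the `k`-particle SIP. -/
def sipGap (c : V → V → ℝ) (α : V → ℝ) (k : ℕ) : ℝ :=
  sInf {r : ℝ | ∃ f : Config V k → ℝ, (∃ η ζ : Config V k, f η ≠ f ζ) ∧
    r = dirichletForm c α f / sipVar α f}

/-- `gap_SIP(G,α) = inf_{k ≥ 2} gap_k(G,α)`. -/
def sipGapInf (c : V → V → ℝ) (α : V → ℝ) : ℝ :=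
  sInf {r : ℝ | ∃ k : ℕ, 2 ≤ k ∧ r = sipGap c α k}

/-- The simple graph underlying a symmetric family of conductances. -/
def graphOf (c : V → V → ℝ) : SimpleGraph V where
  Adj x y := x ≠ y ∧ (0 < c x y ∨ 0 < c y x)
  symm := ⟨fun x y h => ⟨h.1.symm, h.2.symm⟩⟩
  loopless := ⟨fun x h => h.1 rfl⟩

/-- The diameter of the weighted graph: maximal graph distance between two sites. -/
def graphDiam (c : V → V → ℝ) : ℕ :=
  Finset.univ.sup (fun p : V × V => (graphOf c).dist p.1 p.2)

/-- The minimal positive conductance. -/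
def cMin (c : V → V → ℝ) : ℝ :=
  sInf {r : ℝ | 0 < r ∧ ∃ x y, c x y = r}

/-- Minimal site weight. -/
def alphaMin (α : V → ℝ) : ℝ := sInf (Set.range α)

/-- Maximal site weight. -/
def alphaMax (α : V → ℝ) : ℝ := sSup (Set.range α)

/-- Conductances of the complete graph on `V`. -/
def completeCond (V : Type*) [DecidableEq V] : V → V → ℝ :=
  fun x y => if x = y then 0 else 1

/-- The generator matrix of `SIP_k(G,α)` acting on `ℝ^{Ξ_k}` by `mulVec`. -/
def sipMatrix (c : V → V → ℝ) (α : V → ℝ) (k : ℕ) : Matrix (Config V k) (Config V k) ℝ :=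
  fun η ζ => ∑ x, ∑ y, c x y * η.1 x * (α y + η.1 y) *
    ((if η.move x y = ζ then 1 else 0) - (if ζ = η then 1 else 0))

/-- The generator matrix `A_{β,k}` of `k` independent random walks. -/
def rwPartMatrix (c : V → V → ℝ) (β : V → ℝ) (k : ℕ) : Matrix (Config V k) (Config V k) ℝ :=
  fun η ζ => ∑ x, ∑ y, c x y * η.1 x * β y *
    ((if η.move x y = ζ then 1 else 0) - (if ζ = η then 1 else 0))

/-- The generator matrix `B_k` of the pure interaction (fast) dynamics. -/
def clumpMatrix (c : V → V → ℝ) (k : ℕ) : Matrix (Config V k) (Config V k) ℝ :=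
  fun η ζ => ∑ x, ∑ y, c x y * η.1 x * η.1 y *
    ((if η.move x y = ζ then 1 else 0) - (if ζ = η then 1 else 0))

/-- The generator matrix of the purely absorbing (killed) SIP. -/
def killedMatrix (c : V → V → ℝ) (α ω : V → ℝ) (k : ℕ) :
    Matrix (Config V k) (Config V k) ℝ :=
  fun η ζ => sipMatrix c α k η ζ - (if ζ = η then ∑ x, ω x * η.1 x else 0)

/-- `η ∈ Ω_k`: absorbing configurations for the fast dynamics. -/
def inOmega (c : V → V → ℝ) {k : ℕ} (η : Config V k) : Prop :=
  ∀ x y, c x y * η.1 x * η.1 y = 0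

/-- The number of occupied sites (stacks) of a configuration. -/
def numStacks {k : ℕ} (η : Config V k) : ℕ :=
  (Finset.univ.filter fun x => 0 < η.1 x).card

/-- Jump rates of `k` independent random walks: `r^A(η,ζ)`. -/
def rateA (c : V → V → ℝ) (β : V → ℝ) {k : ℕ} (η ζ : Config V k) : ℝ :=
  ∑ x, ∑ y, if η.1 x ≠ 0 ∧ η.move x y = ζ then c x y * η.1 x * β y else 0

/-- Metastable jump rates `r^M(η,ξ) = Σ_ζ r^A(η,ζ) h_ξ(ζ)`, given absorption
probabilities `h`. -/
def rateM (c : V → V → ℝ) (β : V → ℝ) {k : ℕ} (h : Config V k → Config V k → ℝ)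
    (η ξ : Config V k) : ℝ :=
  ∑ ζ, rateA c β η ζ * h ξ ζ

/-- The metastable generator on `Ω_k`, given absorption probabilities `h`. -/
def metaGen (c : V → V → ℝ) (β : V → ℝ) {k : ℕ} (h : Config V k → Config V k → ℝ)
    (g : Config V k → ℝ) (η : Config V k) : ℝ :=
  ∑ ξ, if inOmega c ξ ∧ ξ ≠ η then rateM c β h η ξ * (g ξ - g η) else 0

/-- The (restricted) annihilation operator `â_{k+1} g (η) = Σ_x η_x g(η - δ_x)`. -/
def annihilate {k : ℕ} (g : Config V k → ℝ) (η : Config V (k + 1)) : ℝ :=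
  ∑ x, ∑ ξ : Config V k, if ξ.addOne x = η then (η.1 x : ℝ) * g ξ else 0

/-- The SIP generator as an operator on functions. -/
def sipGen (c : V → V → ℝ) (α : V → ℝ) {k : ℕ} (f : Config V k → ℝ) (η : Config V k) : ℝ :=
  ∑ x, ∑ y, c x y * η.1 x * (α y + η.1 y) * (f (η.move x y) - f η)

/-- The purely absorbing (killed) SIP generator. -/
def killedGen (c : V → V → ℝ) (α ω : V → ℝ) {k : ℕ} (f : Config V k → ℝ)
    (η : Config V k) : ℝ :=
  sipGen c α f η - f η * ∑ x, ω x * η.1 x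

/-- Spectral gap of the killed `k`-particle SIP (Rayleigh quotient infimum). -/
def killedGap (c : V → V → ℝ) (α ω : V → ℝ) (k : ℕ) : ℝ :=
  sInf {r : ℝ | ∃ f : Config V k → ℝ, f ≠ 0 ∧
    r = (∑ η, sipMeasure α η * f η * (-(killedGen c α ω f η))) / sipNormSq α f}

/-- `λ_{k,k}(β)`: the variational bottom eigenvalue of `k` independent walks killed
upon two particles becoming adjacent. -/
def lamLevel (c : V → V → ℝ) (β : V → ℝ) (k : ℕ) : ℝ :=
  sInf {r : ℝ | ∃ f : Config V k → ℝ, f ≠ 0 ∧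
    (∀ η : Config V k, ¬(inOmega c η ∧ numStacks η = k) → f η = 0) ∧
    r = dirichletForm c β f / sipNormSq β f}


/-- The symmetrizing measure `ς_{β,k,m}` on stack configurations. -/
def stackMeasure (β : V → ℝ) {k : ℕ} (η : Config V k) : ℝ :=
  ∏ x, if 0 < η.1 x then β x / η.1 x else 1

/-- The lookdown generator of the SIP with killing, on labeled configurations. -/
def lookdownGen (c : V → V → ℝ) (α ω : V → ℝ) (k : ℕ) (φ : (Fin k → V) → ℝ)
    (v : Fin k → V) : ℝ :=
  (∑ i : Fin k, ∑ x, ∑ y, c x y * (if x = v i then 1 else 0) *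
      (α y + 2 * ∑ j : Fin k, (if (j : ℕ) < (i : ℕ) ∧ v j = y then 1 else 0)) *
      (φ (Function.update v i y) - φ v))
    - φ v * ∑ i, ω (v i)

/-- The unlabeling map `Φ_k` from labeled to unlabeled configurations. -/
def unlabel {k : ℕ} (v : Fin k → V) : Config V k :=
  ⟨fun z => (Finset.univ.filter fun i => v i = z).card, by
    have h := Finset.card_eq_sum_card_fiberwise
      (f := v) (s := Finset.univ) (t := Finset.univ) (fun i _ => Finset.mem_univ _)
    simpa using h.symm⟩

/-- The symmetrization operator `S_k`. -/
def symmetrize (k : ℕ) (φ : (Fin k → V) → ℝ) (v : Fin k → V) : ℝ :=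
  (1 / (Nat.factorial k : ℝ)) * ∑ σ : Equiv.Perm (Fin k), φ (fun i => v (σ i))

/-- `η + δ_x` on the full configuration space `ℕ^V`. -/
def addFn (η : V → ℕ) (x : V) : V → ℕ := fun z => η z + (if z = x then 1 else 0)

/-- `η - δ_x` on the full configuration space (truncated subtraction). -/
def remFn (η : V → ℕ) (x : V) : V → ℕ := fun z => η z - (if z = x then 1 else 0)

/-- `η - δ_x + δ_y` on the full configuration space; `η` itself when `η x = 0`. -/
def moveFn (η : V → ℕ) (x y : V) : V → ℕ :=
  if η x = 0 then η else fun z => η z - (if z = x then 1 else 0) + (if z = y then 1 else 0)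

/-- The generator of the non-conservative (open) SIP. -/
def openGen (c : V → V → ℝ) (α ω θ : V → ℝ) (f : (V → ℕ) → ℝ) (η : V → ℕ) : ℝ :=
  (∑ x, ∑ y, c x y * η x * (α y + η y) * (f (moveFn η x y) - f η))
  + ∑ x, ω x * ((η x : ℝ) * (1 + θ x) * (f (remFn η x) - f η)
      + θ x * (α x + η x) * (f (addFn η x) - f η))

/-- One-site Meixner duality function at density `0`:
`d_{a,0}(m,n) = (n!/(n-m)!) (Γ(a)/Γ(a+m)) 1{m ≤ n}`. -/
def dualD0 (a : ℝ) (m n : ℕ) : ℝ :=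
  if m ≤ n then (Nat.descFactorial n m : ℝ) * (Real.Gamma a / Real.Gamma (a + m)) else 0

/-- One-site Meixner duality function at density `ϱ`. -/
def dualD (a ϱ : ℝ) (m n : ℕ) : ℝ :=
  ∑ l ∈ Finset.range (m + 1), (Nat.choose m l : ℝ) * dualD0 a l n * (-ϱ) ^ (m - l)

/-- The orthogonal duality function `D_{α,ϱ}(ξ,η)`. -/
def dualityFn (α : V → ℝ) (ϱ : ℝ) {k : ℕ} (ξ : Config V k) (η : V → ℕ) : ℝ :=
  ∏ x, dualD (α x) ϱ (ξ.1 x) (η x)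

/-- The polynomial `F_{α,ϱ}^ψ` associated to `ψ : Ξ_k → ℝ`. -/
def liftF (α : V → ℝ) (ϱ : ℝ) {k : ℕ} (ψ : Config V k → ℝ) (η : V → ℕ) : ℝ :=
  ∑ ξ : Config V k, sipMeasure α ξ * ψ ξ * dualityFn α ϱ ξ η

end Defs


end

namespace MDB

open Finset

variable {V : Type*} [Fintype V] [DecidableEq V] {k : ℕ}

/-- The support (set of occupied sites) of a configuration. -/
def stks (η : Config V k) : Finset V := Finset.univ.filter (fun x => 0 < η.1 x)

lemma numStacks_eq (η : Config V k) : numStacks η = (stks η).card := rfl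

lemma mem_stks {η : Config V k} {x : V} : x ∈ stks η ↔ η.1 x ≠ 0 := by
  simp [stks, Nat.pos_iff_ne_zero]

lemma move_fst_apply (η : Config V k) {x : V} (hx : η.1 x ≠ 0) (y z : V) :
    (η.move x y).1 z = η.1 z - (if z = x then 1 else 0) + (if z = y then 1 else 0) := by
  simp [Config.move, hx]

lemma move_self (η : Config V k) (x : V) : η.move x x = η := by
  by_cases h0 : η.1 x = 0
  · simp [Config.move, h0]
  · apply Subtype.ext; funext z
    rw [move_fst_apply η h0]
    by_cases hz : z = x <;> simp [hz] <;> omega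

lemma move_apply_self {η : Config V k} {x y : V} (hx : η.1 x ≠ 0) (hxy : x ≠ y) :
    (η.move x y).1 x = η.1 x - 1 := by
  rw [move_fst_apply η hx]
  simp [hxy, Ne.symm hxy]

lemma move_apply_target {η : Config V k} {x y : V} (hx : η.1 x ≠ 0) (hxy : x ≠ y) :
    (η.move x y).1 y = η.1 y + 1 := by
  rw [move_fst_apply η hx]
  simp [Ne.symm hxy]

lemma move_apply_other {η : Config V k} {x y z : V} (hx : η.1 x ≠ 0)
    (hzx : z ≠ x) (hzy : z ≠ y) : (η.move x y).1 z = η.1 z := by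
  rw [move_fst_apply η hx]; simp [hzx, hzy]

lemma move_move {η : Config V k} {x y : V} (hx : η.1 x ≠ 0) (hxy : x ≠ y) :
    (η.move x y).move y x = η := by
  have hy : (η.move x y).1 y ≠ 0 := by rw [move_apply_target hx hxy]; omega
  apply Subtype.ext; funext z
  rw [move_fst_apply _ hy, move_fst_apply η hx]
  have hx1 : 1 ≤ η.1 x := Nat.one_le_iff_ne_zero.2 hx
  by_cases hzx : z = x
  · subst hzx
    simp only [if_neg hxy, ite_true, eq_self_iff_true]
    omega
  · by_cases hzy : z = y
    · subst hzy
      simp only [if_neg hzx, ite_true, eq_self_iff_true]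
      omega
    · simp only [if_neg hzx, if_neg hzy]
      omega

lemma stks_move_subset {η : Config V k} {x y : V} (hy : η.1 y ≠ 0) :
    stks (η.move x y) ⊆ stks η := by
  by_cases hx : η.1 x = 0
  · rw [show η.move x y = η by simp [Config.move, hx]]
  · intro z hz
    rw [mem_stks] at hz ⊢
    rw [move_fst_apply η hx] at hz
    by_cases hzy : z = y
    · subst hzy; exact hy
    · by_cases hzx : z = x
      · subst hzx; exact hx
      · simp only [if_neg hzx, if_neg hzy] at hz
        omega


section Clump
variable (c : V → V → ℝ)

lemma clump_apply (η ζ : Config V k) : clumpMatrix c k η ζ =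
    ∑ x, ∑ y, c x y * η.1 x * η.1 y *
      ((if η.move x y = ζ then 1 else 0) - (if ζ = η then 1 else 0)) := rfl

lemma clump_row_zero {η : Config V k} (hη : inOmega c η) (ζ : Config V k) :
    clumpMatrix c k η ζ = 0 := by
  rw [clump_apply]
  refine Finset.sum_eq_zero fun x _ => Finset.sum_eq_zero fun y _ => ?_
  rw [hη x y, zero_mul]

lemma clump_zero_of_not_subset {η ζ : Config V k} (hns : ¬ stks ζ ⊆ stks η) :
    clumpMatrix c k η ζ = 0 := by
  rw [clump_apply]
  refine Finset.sum_eq_zero fun x _ => Finset.sum_eq_zero fun y _ => ?_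
  by_cases h0 : c x y * η.1 x * η.1 y = 0
  · rw [h0, zero_mul]
  · have hy : η.1 y ≠ 0 := by
      intro hy; exact h0 (by rw [hy]; simp)
    have h1 : ¬(η.move x y = ζ) := fun he => hns (by rw [← he]; exact stks_move_subset hy)
    have h2 : ¬(ζ = η) := fun he => hns (by rw [he])
    rw [if_neg h1, if_neg h2, sub_zero, mul_zero]

lemma clump_zero_into_omega {η ξ : Config V k} (hξΩ : inOmega c ξ)
    (hsupp : stks η = stks ξ) (hne : η ≠ ξ) : clumpMatrix c k η ξ = 0 := by
  rw [clump_apply]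
  refine Finset.sum_eq_zero fun x _ => Finset.sum_eq_zero fun y _ => ?_
  by_cases h0 : c x y * η.1 x * η.1 y = 0
  · rw [h0, zero_mul]
  · simp only [mul_eq_zero, not_or, Nat.cast_eq_zero] at h0
    obtain ⟨⟨hc, hx⟩, hy⟩ := h0
    have hxs : x ∈ stks ξ := hsupp ▸ mem_stks.2 hx
    have hys : y ∈ stks ξ := hsupp ▸ mem_stks.2 hy
    rw [mem_stks] at hxs hys
    exact absurd (hξΩ x y)
      (mul_ne_zero (mul_ne_zero hc (Nat.cast_ne_zero.2 hxs)) (Nat.cast_ne_zero.2 hys))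

lemma pow_zero_of_not_subset : ∀ (n : ℕ) {η ζ : Config V k}, ¬ stks ζ ⊆ stks η →
    ((clumpMatrix c k) ^ n) η ζ = 0 := by
  intro n
  induction n with
  | zero =>
    intro η ζ hns
    have hne : η ≠ ζ := fun he => hns (by rw [he])
    simp [Matrix.one_apply_ne hne]
  | succ n ih =>
    intro η ζ hns
    rw [pow_succ', Matrix.mul_apply]
    refine Finset.sum_eq_zero fun ρ _ => ?_
    by_cases hsub : stks ρ ⊆ stks η
    · rw [ih (fun hh => hns (hh.trans hsub)), mul_zero]
    · rw [clump_zero_of_not_subset c hsub, zero_mul]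

lemma pow_succ_row_omega {η : Config V k} (hη : inOmega c η) (n : ℕ) (ζ : Config V k) :
    ((clumpMatrix c k) ^ (n + 1)) η ζ = 0 := by
  rw [pow_succ', Matrix.mul_apply]
  refine Finset.sum_eq_zero fun ρ _ => ?_
  rw [clump_row_zero c hη, zero_mul]

lemma pow_zero_same_supp {ξ : Config V k} (hξΩ : inOmega c ξ) :
    ∀ (n : ℕ) {ζ : Config V k}, stks ζ = stks ξ → ζ ≠ ξ →
      ((clumpMatrix c k) ^ n) ζ ξ = 0 := by
  intro n
  induction n with
  | zero => intro ζ hsupp hne; simp [Matrix.one_apply_ne hne]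
  | succ n ih =>
    intro ζ hsupp hne
    rw [pow_succ', Matrix.mul_apply]
    refine Finset.sum_eq_zero fun ρ _ => ?_
    by_cases hB : clumpMatrix c k ζ ρ = 0
    · rw [hB, zero_mul]
    · have hsubρ : stks ρ ⊆ stks ζ := by
        by_contra hn; exact hB (clump_zero_of_not_subset c hn)
      by_cases hP : ((clumpMatrix c k) ^ n) ρ ξ = 0
      · rw [hP, mul_zero]
      · have hsubξ : stks ξ ⊆ stks ρ := by
          by_contra hn; exact hP (pow_zero_of_not_subset c n hn)
        have hρeq : stks ρ = stks ξ := Finset.Subset.antisymm (hsupp ▸ hsubρ) hsubξ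
        by_cases hρξ : ρ = ξ
        · subst hρξ
          rw [clump_zero_into_omega c hξΩ hsupp hne, zero_mul]
        · rw [ih hρeq hρξ, mul_zero]

end Clump

section ExpEntries

variable {I : Type*} [Fintype I] [DecidableEq I]

lemma exp_entry_hasSum (M : Matrix I I ℝ) (i j : I) :
    HasSum (fun n : ℕ => ((n.factorial : ℝ))⁻¹ * ((M ^ n) i j)) (NormedSpace.exp M i j) := by
  letI : SeminormedRing (Matrix I I ℝ) := Matrix.linftyOpSemiNormedRing
  letI : NormedRing (Matrix I I ℝ) := Matrix.linftyOpNormedRing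
  letI : NormedAlgebra ℝ (Matrix I I ℝ) := Matrix.linftyOpNormedAlgebra
  have h1 : HasSum (fun n : ℕ => ((n.factorial : ℝ))⁻¹ • M ^ n) (NormedSpace.exp M) := by
    have := NormedSpace.expSeries_hasSum_exp (𝕂 := ℝ) M
    simp only [NormedSpace.expSeries_apply_eq] at this
    exact this
  let L1 : (∀ _ : I, (I → ℝ)) →L[ℝ] (I → ℝ) := ContinuousLinearMap.proj i
  let L2 : (∀ _ : I, ℝ) →L[ℝ] ℝ := ContinuousLinearMap.proj j
  have h2 := (L2.comp L1).hasSum h1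
  exact h2

lemma exp_entry_hasDerivAt (B : Matrix I I ℝ) (i j : I) :
    HasDerivAt (fun u : ℝ => NormedSpace.exp (u • B) i j)
      ((NormedSpace.exp ((0:ℝ) • B) * B) i j) 0 := by
  letI : SeminormedRing (Matrix I I ℝ) := Matrix.linftyOpSemiNormedRing
  letI : NormedRing (Matrix I I ℝ) := Matrix.linftyOpNormedRing
  letI : NormedAlgebra ℝ (Matrix I I ℝ) := Matrix.linftyOpNormedAlgebra
  have hd : HasDerivAt (fun u : ℝ => NormedSpace.exp (u • B))
      (NormedSpace.exp ((0:ℝ) • B) * B) 0 := hasDerivAt_exp_smul_const B 0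
  let e : Matrix I I ℝ →ₗ[ℝ] ℝ :=
    (LinearMap.proj j).comp (LinearMap.proj (R := ℝ) (φ := fun _ : I => I → ℝ) i)
  let L : Matrix I I ℝ →L[ℝ] ℝ := LinearMap.toContinuousLinearMap e
  exact L.hasFDerivAt.comp_hasDerivAt 0 hd

lemma exp_smul_add (B : Matrix I I ℝ) (s t : ℝ) :
    NormedSpace.exp ((s + t) • B) = NormedSpace.exp (s • B) * NormedSpace.exp (t • B) := by
  rw [add_smul]
  exact Matrix.exp_add_of_commute _ _ (((Commute.refl B).smul_left s).smul_right t)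

lemma exp_smul_entry_hasSum (B : Matrix I I ℝ) (t : ℝ) (i j : I) :
    HasSum (fun n : ℕ => ((n.factorial : ℝ))⁻¹ * (t ^ n * ((B ^ n) i j)))
      (NormedSpace.exp (t • B) i j) := by
  have h := exp_entry_hasSum (t • B) i j
  have he : (fun n : ℕ => ((n.factorial : ℝ))⁻¹ * (((t • B) ^ n) i j))
      = fun n : ℕ => ((n.factorial : ℝ))⁻¹ * (t ^ n * ((B ^ n) i j)) := by
    funext n
    rw [smul_pow, Matrix.smul_apply, smul_eq_mul]
  rwa [he] at h

end ExpEntries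

section HFacts
variable (c : V → V → ℝ)

lemma exp_entry_zero_of_not_subset {ζ ξ : Config V k} (hns : ¬ stks ξ ⊆ stks ζ) (t : ℝ) :
    NormedSpace.exp (t • clumpMatrix c k) ζ ξ = 0 := by
  have h := exp_smul_entry_hasSum (clumpMatrix c k) t ζ ξ
  have he : (fun n : ℕ => ((n.factorial : ℝ))⁻¹ * (t ^ n * (((clumpMatrix c k) ^ n) ζ ξ)))
      = fun _ : ℕ => (0:ℝ) := by
    funext n
    rw [pow_zero_of_not_subset c n hns, mul_zero, mul_zero]
  rw [he] at h
  exact (hasSum_zero.unique h).symm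

lemma exp_entry_omega_row {ζ : Config V k} (hζ : inOmega c ζ) (ξ : Config V k) (t : ℝ) :
    NormedSpace.exp (t • clumpMatrix c k) ζ ξ = if ζ = ξ then 1 else 0 := by
  have h := exp_smul_entry_hasSum (clumpMatrix c k) t ζ ξ
  have he : (fun n : ℕ => ((n.factorial : ℝ))⁻¹ * (t ^ n * (((clumpMatrix c k) ^ n) ζ ξ)))
      = fun n : ℕ => if n = 0 then (if ζ = ξ then (1:ℝ) else 0) else 0 := by
    funext n
    cases n with
    | zero => simp [Matrix.one_apply]
    | succ n => rw [pow_succ_row_omega c hζ, mul_zero, mul_zero, if_neg (Nat.succ_ne_zero n)]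
  rw [he] at h
  exact ((hasSum_ite_eq 0 _).unique h).symm

lemma exp_entry_same_supp {ζ ξ : Config V k} (hξΩ : inOmega c ξ) (hsupp : stks ζ = stks ξ)
    (hne : ζ ≠ ξ) (t : ℝ) : NormedSpace.exp (t • clumpMatrix c k) ζ ξ = 0 := by
  have h := exp_smul_entry_hasSum (clumpMatrix c k) t ζ ξ
  have he : (fun n : ℕ => ((n.factorial : ℝ))⁻¹ * (t ^ n * (((clumpMatrix c k) ^ n) ζ ξ)))
      = fun _ : ℕ => (0:ℝ) := by
    funext n
    rw [pow_zero_same_supp c hξΩ n hsupp hne, mul_zero, mul_zero]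
  rw [he] at h
  exact (hasSum_zero.unique h).symm

lemma mulVec_ind (M : Matrix (Config V k) (Config V k) ℝ) (ξ ζ : Config V k) :
    M.mulVec (fun ρ => if ρ = ξ then (1:ℝ) else 0) ζ = M ζ ξ := by
  simp [Matrix.mulVec, dotProduct, mul_ite, mul_one, mul_zero]

variable {c} {h : Config V k → Config V k → ℝ}
variable (hlim : ∀ ξ : Config V k, inOmega c ξ → ∀ ζ : Config V k,
      Filter.Tendsto
        (fun t : ℝ => (NormedSpace.exp (t • clumpMatrix c k)).mulVec
          (fun ρ => if ρ = ξ then 1 else 0) ζ)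
        Filter.atTop (nhds (h ξ ζ)))

include hlim

lemma hlim' {ξ : Config V k} (hξΩ : inOmega c ξ) (ζ : Config V k) :
    Filter.Tendsto (fun t : ℝ => NormedSpace.exp (t • clumpMatrix c k) ζ ξ)
      Filter.atTop (nhds (h ξ ζ)) := by
  have := hlim ξ hξΩ ζ
  simpa [mulVec_ind] using this

lemma h_zero_of_not_subset {ξ ζ : Config V k} (hξΩ : inOmega c ξ)
    (hns : ¬ stks ξ ⊆ stks ζ) : h ξ ζ = 0 := by
  have h1 := hlim' hlim hξΩ ζ
  have he : (fun t : ℝ => NormedSpace.exp (t • clumpMatrix c k) ζ ξ) = fun _ => (0:ℝ) :=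
    funext fun t => exp_entry_zero_of_not_subset c hns t
  rw [he] at h1
  exact tendsto_nhds_unique h1 tendsto_const_nhds

lemma h_omega_val {ξ ζ : Config V k} (hξΩ : inOmega c ξ) (hζΩ : inOmega c ζ) :
    h ξ ζ = if ζ = ξ then 1 else 0 := by
  have h1 := hlim' hlim hξΩ ζ
  have he : (fun t : ℝ => NormedSpace.exp (t • clumpMatrix c k) ζ ξ)
      = fun _ => (if ζ = ξ then (1:ℝ) else 0) :=
    funext fun t => exp_entry_omega_row c hζΩ ξ t
  rw [he] at h1
  exact tendsto_nhds_unique h1 tendsto_const_nhds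

lemma h_same_supp_zero {ξ ζ : Config V k} (hξΩ : inOmega c ξ) (hsupp : stks ζ = stks ξ)
    (hne : ζ ≠ ξ) : h ξ ζ = 0 := by
  have h1 := hlim' hlim hξΩ ζ
  have he : (fun t : ℝ => NormedSpace.exp (t • clumpMatrix c k) ζ ξ) = fun _ => (0:ℝ) :=
    funext fun t => exp_entry_same_supp c hξΩ hsupp hne t
  rw [he] at h1
  exact tendsto_nhds_unique h1 tendsto_const_nhds

lemma h_delta {ξ ζ : Config V k} (hξΩ : inOmega c ξ) (hN : numStacks ζ = numStacks ξ) :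
    h ξ ζ = if ζ = ξ then 1 else 0 := by
  by_cases hzx : ζ = ξ
  · subst hzx
    rw [h_omega_val hlim hξΩ hξΩ]
  · rw [if_neg hzx]
    by_cases hsub : stks ξ ⊆ stks ζ
    · have heq : stks ζ = stks ξ :=
        (Finset.eq_of_subset_of_card_le hsub (le_of_eq (by
          rw [← numStacks_eq, ← numStacks_eq, hN]))).symm
      exact h_same_supp_zero hlim hξΩ heq hzx
    · exact h_zero_of_not_subset hlim hξΩ hsub

lemma h_harmonic {ξ : Config V k} (hξΩ : inOmega c ξ) (ζ : Config V k) :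
    ∑ ρ, clumpMatrix c k ζ ρ * h ξ ρ = 0 := by
  have key : ∀ s : ℝ, ∑ ρ, NormedSpace.exp (s • clumpMatrix c k) ζ ρ * h ξ ρ = h ξ ζ := by
    intro s
    have T1 : Filter.Tendsto (fun t : ℝ => NormedSpace.exp ((s + t) • clumpMatrix c k) ζ ξ)
        Filter.atTop (nhds (∑ ρ, NormedSpace.exp (s • clumpMatrix c k) ζ ρ * h ξ ρ)) := by
      have he : (fun t : ℝ => NormedSpace.exp ((s + t) • clumpMatrix c k) ζ ξ)
          = fun t : ℝ => ∑ ρ, NormedSpace.exp (s • clumpMatrix c k) ζ ρ *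
              NormedSpace.exp (t • clumpMatrix c k) ρ ξ := by
        funext t
        rw [exp_smul_add, Matrix.mul_apply]
      rw [he]
      exact tendsto_finset_sum _ fun ρ _ => (hlim' hlim hξΩ ρ).const_mul _
    have T2 : Filter.Tendsto (fun t : ℝ => NormedSpace.exp ((s + t) • clumpMatrix c k) ζ ξ)
        Filter.atTop (nhds (h ξ ζ)) := by
      have hcomp : Filter.Tendsto (fun t : ℝ => s + t) Filter.atTop Filter.atTop :=
        Filter.tendsto_atTop_add_const_left _ s Filter.tendsto_id
      exact (hlim' hlim hξΩ ζ).comp hcomp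
    exact tendsto_nhds_unique T1 T2
  have hD : HasDerivAt (fun s : ℝ => ∑ ρ, NormedSpace.exp (s • clumpMatrix c k) ζ ρ * h ξ ρ)
      (∑ ρ, (NormedSpace.exp ((0:ℝ) • clumpMatrix c k) * clumpMatrix c k) ζ ρ * h ξ ρ) 0 :=
    HasDerivAt.fun_sum fun ρ _ => (exp_entry_hasDerivAt (clumpMatrix c k) ζ ρ).mul_const _
  have hC : (fun s : ℝ => ∑ ρ, NormedSpace.exp (s • clumpMatrix c k) ζ ρ * h ξ ρ)
      = fun _ : ℝ => h ξ ζ := funext key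
  rw [hC] at hD
  have := hD.unique (hasDerivAt_const 0 (h ξ ζ))
  simpa [zero_smul, NormedSpace.exp_zero] using this

end HFacts

section Measure

variable (β : V → ℝ)

/-- One–site factor of the SIP reversible measure. -/
noncomputable def pf (a : ℝ) (n : ℕ) : ℝ := (∏ j ∈ Finset.range n, (a + j)) / (n.factorial : ℝ)

/-- The (unnormalized) SIP reversible measure with parameters `ε β`. -/
noncomputable def mmu (ε : ℝ) (ζ : Config V k) : ℝ := ∏ z, pf (ε * β z) (ζ.1 z)

/-- Rescaled one–site factor. -/
noncomputable def qf (ε b : ℝ) : ℕ → ℝ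
  | 0 => 1
  | n+1 => b * (∏ j ∈ Finset.range n, (ε * b + (j+1))) / ((n+1).factorial : ℝ)

/-- Rescaled measure. -/
noncomputable def gg (ε : ℝ) (ζ : Config V k) : ℝ := ∏ z, qf ε (β z) (ζ.1 z)

lemma pf_succ (a : ℝ) (n : ℕ) : pf a (n + 1) = pf a n * (a + n) / (n + 1) := by
  have h1 : ((n.factorial : ℝ)) ≠ 0 := Nat.cast_ne_zero.2 n.factorial_ne_zero
  have h2 : ((n:ℝ) + 1) ≠ 0 := by positivity
  rw [pf, pf, Finset.prod_range_succ, Nat.factorial_succ]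
  push_cast
  rw [div_mul_eq_mul_div, div_div, mul_comm ((n:ℝ)+1)]

lemma pf_factor (ε b : ℝ) (n : ℕ) :
    pf (ε * b) n = (if n = 0 then 1 else ε) * qf ε b n := by
  cases n with
  | zero => simp [pf, qf]
  | succ n =>
    rw [pf, Finset.prod_range_succ', qf, if_neg (Nat.succ_ne_zero n)]
    push_cast
    ring

lemma mmu_eq (ε : ℝ) (ζ : Config V k) : mmu β ε ζ = ε ^ (numStacks ζ) * gg β ε ζ := by
  rw [mmu, gg]
  have he : ∀ z : V, pf (ε * β z) (ζ.1 z)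
      = ε ^ (if 0 < ζ.1 z then 1 else 0) * qf ε (β z) (ζ.1 z) := by
    intro z
    rw [pf_factor]
    congr 1
    by_cases h0 : ζ.1 z = 0 <;> simp [h0, Nat.pos_iff_ne_zero]
  rw [Finset.prod_congr rfl fun z _ => he z, Finset.prod_mul_distrib,
    Finset.prod_pow_eq_pow_sum]
  congr 1
  rw [numStacks, Finset.card_filter]

lemma gg_cont (ζ : Config V k) : Continuous fun ε => gg β ε ζ := by
  apply continuous_finset_prod
  intro z _
  rcases hn : ζ.1 z with _ | n
  · simpa [qf] using continuous_const
  · have hc : Continuous fun ε : ℝ => ∏ j ∈ Finset.range n, (ε * β z + (j+1)) :=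
      continuous_finset_prod _ fun j _ => by continuity
    simpa [qf] using (continuous_const.mul hc).div_const _

lemma gg_zero (ζ : Config V k) : gg β 0 ζ = stackMeasure β ζ := by
  rw [gg, stackMeasure]
  refine Finset.prod_congr rfl fun z _ => ?_
  rcases hn : ζ.1 z with _ | n
  · simp [qf]
  · have hprod : (∏ j ∈ Finset.range n, ((0:ℝ) * β z + (j+1))) = (n.factorial : ℝ) := by
      have hc : ∀ j ∈ Finset.range n, ((0:ℝ) * β z + (j+1)) = ((j+1 : ℕ) : ℝ) := by
        intro j _; push_cast; ring
      rw [Finset.prod_congr rfl hc, ← Nat.cast_prod, Finset.prod_range_add_one_eq_factorial]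
    have h1 : ((n.factorial : ℝ)) ≠ 0 := Nat.cast_ne_zero.2 n.factorial_ne_zero
    have h2 : ((n:ℝ) + 1) ≠ 0 := by positivity
    rw [if_pos (Nat.succ_pos n), qf, hprod, Nat.factorial_succ]
    push_cast
    field_simp

end Measure

section Rates
variable (c : V → V → ℝ) (β : V → ℝ)

/-- Total interaction (fast) jump rates. -/
noncomputable def bR (ζ ρ : Config V k) : ℝ :=
  ∑ x, ∑ y, if ζ.1 x ≠ 0 ∧ ζ.move x y = ρ then c x y * ζ.1 x * ζ.1 y else 0

/-- Total SIP jump rates with parameters `ε β`. -/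
noncomputable def lR (ε : ℝ) (ζ ρ : Config V k) : ℝ :=
  ∑ x, ∑ y, if ζ.1 x ≠ 0 ∧ ζ.move x y = ρ then c x y * ζ.1 x * (ε * β y + ζ.1 y) else 0

lemma lR_eq (ε : ℝ) (ζ ρ : Config V k) :
    lR c β ε ζ ρ = ε * rateA c β ζ ρ + bR c ζ ρ := by
  rw [lR, rateA, bR, Finset.mul_sum, ← Finset.sum_add_distrib]
  refine Finset.sum_congr rfl fun x _ => ?_
  rw [Finset.mul_sum, ← Finset.sum_add_distrib]
  refine Finset.sum_congr rfl fun y _ => ?_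
  split_ifs with hc
  · push_cast; ring
  · simp

lemma bR_op (g : Config V k → ℝ) (ζ : Config V k) :
    ∑ ρ, bR c ζ ρ * (g ρ - g ζ) = ∑ ρ, clumpMatrix c k ζ ρ * g ρ := by
  have h1 : ∑ ρ, bR c ζ ρ * (g ρ - g ζ)
      = ∑ x, ∑ y, c x y * ζ.1 x * ζ.1 y * (g (ζ.move x y) - g ζ) := by
    have e1 : ∑ ρ, bR c ζ ρ * (g ρ - g ζ) = ∑ ρ, ∑ x, ∑ y,
        (if ζ.1 x ≠ 0 ∧ ζ.move x y = ρ then c x y * ζ.1 x * ζ.1 y else 0) * (g ρ - g ζ) := by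
      refine Finset.sum_congr rfl fun ρ _ => ?_
      rw [bR, Finset.sum_mul]
      exact Finset.sum_congr rfl fun x _ => by rw [Finset.sum_mul]
    rw [e1, Finset.sum_comm]
    refine Finset.sum_congr rfl fun x _ => ?_
    rw [Finset.sum_comm]
    refine Finset.sum_congr rfl fun y _ => ?_
    by_cases hx : ζ.1 x = 0
    · simp [hx]
    · have e2 : ∀ ρ : Config V k,
          (if ζ.1 x ≠ 0 ∧ ζ.move x y = ρ then c x y * ζ.1 x * ζ.1 y else 0) * (g ρ - g ζ)
          = if ζ.move x y = ρ then c x y * ζ.1 x * ζ.1 y * (g ρ - g ζ) else 0 := by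
        intro ρ
        by_cases he : ζ.move x y = ρ <;> simp [hx, he]
      rw [Finset.sum_congr rfl fun ρ _ => e2 ρ, Finset.sum_ite_eq]
      simp
  have h2 : ∑ ρ, clumpMatrix c k ζ ρ * g ρ
      = ∑ x, ∑ y, c x y * ζ.1 x * ζ.1 y * (g (ζ.move x y) - g ζ) := by
    have e1 : ∑ ρ, clumpMatrix c k ζ ρ * g ρ = ∑ ρ, ∑ x, ∑ y,
        (c x y * ζ.1 x * ζ.1 y *
          ((if ζ.move x y = ρ then (1:ℝ) else 0) - (if ρ = ζ then 1 else 0))) * g ρ := by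
      refine Finset.sum_congr rfl fun ρ _ => ?_
      rw [clump_apply, Finset.sum_mul]
      exact Finset.sum_congr rfl fun x _ => by rw [Finset.sum_mul]
    rw [e1, Finset.sum_comm]
    refine Finset.sum_congr rfl fun x _ => ?_
    rw [Finset.sum_comm]
    refine Finset.sum_congr rfl fun y _ => ?_
    have e2 : ∀ ρ : Config V k,
        (c x y * ζ.1 x * ζ.1 y *
          ((if ζ.move x y = ρ then (1:ℝ) else 0) - (if ρ = ζ then 1 else 0))) * g ρ
        = (if ζ.move x y = ρ then c x y * ζ.1 x * ζ.1 y * g ρ else 0)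
          - (if ρ = ζ then c x y * ζ.1 x * ζ.1 y * g ρ else 0) := by
      intro ρ
      by_cases h2' : ρ = ζ
      · rw [h2']
        by_cases h1' : ζ.move x y = ζ <;> simp [h1'] <;> ring
      · by_cases h1' : ζ.move x y = ρ <;> simp [h1', h2'] <;> ring
    rw [Finset.sum_congr rfl fun ρ _ => e2 ρ, Finset.sum_sub_distrib,
      Finset.sum_ite_eq, Finset.sum_ite_eq']
    simp
    ring
  rw [h1, h2]

variable {β}

lemma key_move (ε : ℝ) (η : Config V k) {x y : V} (hxy : x ≠ y) (hx : η.1 x ≠ 0) :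
    mmu β ε η * (↑(η.1 x) * (ε * β y + ↑(η.1 y))) =
      mmu β ε (η.move x y) * (↑((η.move x y).1 y) * (ε * β x + ↑((η.move x y).1 x))) := by
  obtain ⟨n, hn⟩ : ∃ n, η.1 x = n + 1 := ⟨η.1 x - 1, by omega⟩
  have hρx : (η.move x y).1 x = n := by rw [move_apply_self hx hxy, hn]; omega
  have hρy : (η.move x y).1 y = η.1 y + 1 := move_apply_target hx hxy
  have hsplit : ∀ ζ : Config V k, mmu β ε ζ =
      pf (ε * β x) (ζ.1 x) * (pf (ε * β y) (ζ.1 y) *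
        ∏ z ∈ (Finset.univ.erase x).erase y, pf (ε * β z) (ζ.1 z)) := by
    intro ζ
    rw [mmu, ← Finset.mul_prod_erase Finset.univ _ (Finset.mem_univ x)]
    congr 1
    rw [← Finset.mul_prod_erase (Finset.univ.erase x) _
      (Finset.mem_erase.2 ⟨Ne.symm hxy, Finset.mem_univ y⟩)]
  have hrest : ∏ z ∈ (Finset.univ.erase x).erase y, pf (ε * β z) ((η.move x y).1 z)
      = ∏ z ∈ (Finset.univ.erase x).erase y, pf (ε * β z) (η.1 z) := by
    refine Finset.prod_congr rfl fun z hz => ?_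
    rw [Finset.mem_erase] at hz
    obtain ⟨hzy, hz2⟩ := hz
    rw [Finset.mem_erase] at hz2
    rw [move_apply_other hx hz2.1 hzy]
  rw [hsplit η, hsplit (η.move x y), hrest, hρx, hρy, hn]
  rw [pf_succ, pf_succ]
  have h1 : ((n:ℝ) + 1) ≠ 0 := by positivity
  have h2 : ((η.1 y : ℝ) + 1) ≠ 0 := by positivity
  push_cast
  field_simp

lemma pairDB (hsymm : ∀ x y, c x y = c y x) (hloop : ∀ x, c x x = 0)
    (ε : ℝ) (ζ ρ : Config V k) :
    mmu β ε ζ * lR c β ε ζ ρ = mmu β ε ρ * lR c β ε ρ ζ := by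
  have expand : ∀ σ τ : Config V k, mmu β ε σ * lR c β ε σ τ = ∑ x, ∑ y,
      (if σ.1 x ≠ 0 ∧ σ.move x y = τ then
        mmu β ε σ * (c x y * σ.1 x * (ε * β y + σ.1 y)) else 0) := by
    intro σ τ
    rw [lR, Finset.mul_sum]
    refine Finset.sum_congr rfl fun x _ => ?_
    rw [Finset.mul_sum]
    refine Finset.sum_congr rfl fun y _ => ?_
    rw [mul_ite, mul_zero]
  rw [expand, expand]
  conv_rhs => rw [Finset.sum_comm]
  refine Finset.sum_congr rfl fun x _ => Finset.sum_congr rfl fun y _ => ?_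
  by_cases hxy : x = y
  · subst hxy
    split_ifs <;> simp [hloop x]
  · have hiff : (ζ.1 x ≠ 0 ∧ ζ.move x y = ρ) ↔ (ρ.1 y ≠ 0 ∧ ρ.move y x = ζ) := by
      constructor
      · rintro ⟨hx, rfl⟩
        exact ⟨by rw [move_apply_target hx hxy]; exact Nat.succ_ne_zero _, move_move hx hxy⟩
      · rintro ⟨hy, rfl⟩
        exact ⟨by rw [move_apply_target hy (Ne.symm hxy)]; exact Nat.succ_ne_zero _,
          move_move hy (Ne.symm hxy)⟩
    by_cases hc : ζ.1 x ≠ 0 ∧ ζ.move x y = ρ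
    · rw [if_pos hc, if_pos (hiff.1 hc)]
      obtain ⟨hx, he⟩ := hc
      subst he
      rw [hsymm y x]
      linear_combination c x y * key_move ε ζ hxy hx
    · rw [if_neg hc, if_neg (fun hh => hc (hiff.2 hh))]

lemma bilinear (hsymm : ∀ x y, c x y = c y x) (hloop : ∀ x, c x x = 0)
    (ε : ℝ) (F G : Config V k → ℝ) :
    ∑ ζ : Config V k, ∑ ρ : Config V k,
      (mmu β ε ζ * lR c β ε ζ ρ) * (F ζ * G ρ - G ζ * F ρ) = 0 := by
  have hswap : ∑ ζ : Config V k, ∑ ρ : Config V k,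
        (mmu β ε ζ * lR c β ε ζ ρ) * (F ζ * G ρ - G ζ * F ρ)
      = ∑ ζ : Config V k, ∑ ρ : Config V k,
        (mmu β ε ρ * lR c β ε ρ ζ) * (F ρ * G ζ - G ρ * F ζ) := Finset.sum_comm
  have hneg : ∀ ζ ρ : Config V k, (mmu β ε ρ * lR c β ε ρ ζ) * (F ρ * G ζ - G ρ * F ζ)
      = -((mmu β ε ζ * lR c β ε ζ ρ) * (F ζ * G ρ - G ζ * F ρ)) := by
    intro ζ ρ
    rw [← pairDB c hsymm hloop ε ζ ρ]
    ring
  have hTT : ∑ ζ : Config V k, ∑ ρ : Config V k,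
        (mmu β ε ζ * lR c β ε ζ ρ) * (F ζ * G ρ - G ζ * F ρ)
      = -∑ ζ : Config V k, ∑ ρ : Config V k,
        (mmu β ε ζ * lR c β ε ζ ρ) * (F ζ * G ρ - G ζ * F ρ) := by
    nth_rewrite 1 [hswap]
    rw [Finset.sum_congr rfl fun ζ _ => Finset.sum_congr rfl fun ρ _ => hneg ζ ρ]
    simp [Finset.sum_neg_distrib]
  linarith

end Rates

section Mid
variable {c : V → V → ℝ} {β : V → ℝ} {h : Config V k → Config V k → ℝ}

variable (hlim : ∀ ξ : Config V k, inOmega c ξ → ∀ ζ : Config V k,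
      Filter.Tendsto
        (fun t : ℝ => (NormedSpace.exp (t • clumpMatrix c k)).mulVec
          (fun ρ => if ρ = ξ then 1 else 0) ζ)
        Filter.atTop (nhds (h ξ ζ)))

include hlim

lemma mid_identity (hsymm : ∀ x y, c x y = c y x) (hloop : ∀ x, c x x = 0)
    {ξ η : Config V k} (hξΩ : inOmega c ξ) (hηΩ : inOmega c η)
    (ε : ℝ) (hε : ε ≠ 0) :
    ∑ ζ : Config V k, mmu β ε ζ *
      (h ξ ζ * (∑ ρ, rateA c β ζ ρ * (h η ρ - h η ζ))
        - h η ζ * (∑ ρ, rateA c β ζ ρ * (h ξ ρ - h ξ ζ))) = 0 := by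
  have hbil := bilinear c (β := β) hsymm hloop ε (h ξ) (h η)
  have hLop : ∀ (χ : Config V k), inOmega c χ → ∀ ζ : Config V k,
      ∑ ρ, lR c β ε ζ ρ * (h χ ρ - h χ ζ) = ε * ∑ ρ, rateA c β ζ ρ * (h χ ρ - h χ ζ) := by
    intro χ hχ ζ
    have e : ∀ ρ : Config V k, lR c β ε ζ ρ * (h χ ρ - h χ ζ)
        = ε * (rateA c β ζ ρ * (h χ ρ - h χ ζ)) + bR c ζ ρ * (h χ ρ - h χ ζ) := by
      intro ρ; rw [lR_eq]; ring
    rw [Finset.sum_congr rfl fun ρ _ => e ρ, Finset.sum_add_distrib, ← Finset.mul_sum,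
      bR_op, h_harmonic hlim hχ, add_zero]
  have step1 : ∀ ζ : Config V k,
      ∑ ρ, (mmu β ε ζ * lR c β ε ζ ρ) * (h ξ ζ * h η ρ - h η ζ * h ξ ρ)
      = mmu β ε ζ * (h ξ ζ * ∑ ρ, lR c β ε ζ ρ * (h η ρ - h η ζ)
          - h η ζ * ∑ ρ, lR c β ε ζ ρ * (h ξ ρ - h ξ ζ)) := by
    intro ζ
    have e : ∀ ρ : Config V k,
        (mmu β ε ζ * lR c β ε ζ ρ) * (h ξ ζ * h η ρ - h η ζ * h ξ ρ)
        = mmu β ε ζ * (h ξ ζ * (lR c β ε ζ ρ * (h η ρ - h η ζ))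
            - h η ζ * (lR c β ε ζ ρ * (h ξ ρ - h ξ ζ))) := by
      intro ρ; ring
    rw [Finset.sum_congr rfl fun ρ _ => e ρ, ← Finset.mul_sum]
    congr 1
    rw [Finset.sum_sub_distrib, ← Finset.mul_sum, ← Finset.mul_sum]
  rw [Finset.sum_congr rfl fun ζ _ => step1 ζ] at hbil
  have step2 : ∀ ζ : Config V k,
      mmu β ε ζ * (h ξ ζ * ∑ ρ, lR c β ε ζ ρ * (h η ρ - h η ζ)
          - h η ζ * ∑ ρ, lR c β ε ζ ρ * (h ξ ρ - h ξ ζ))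
      = ε * (mmu β ε ζ *
          (h ξ ζ * (∑ ρ, rateA c β ζ ρ * (h η ρ - h η ζ))
            - h η ζ * (∑ ρ, rateA c β ζ ρ * (h ξ ρ - h ξ ζ)))) := by
    intro ζ
    rw [hLop η hηΩ ζ, hLop ξ hξΩ ζ]
    ring
  rw [Finset.sum_congr rfl fun ζ _ => step2 ζ, ← Finset.mul_sum] at hbil
  exact (mul_eq_zero.1 hbil).resolve_left hε

end Mid

end MDB

theorem metastable_detailed_balance
    {V : Type*} [Fintype V] [DecidableEq V] (c : V → V → ℝ) (β : V → ℝ)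
    (hsymm : ∀ x y, c x y = c y x) (hnonneg : ∀ x y, 0 ≤ c x y)
    (hloop : ∀ x, c x x = 0) (hconn : (graphOf c).Connected)
    (hβ : ∀ x, 0 < β x) (k m : ℕ) (hk : 2 ≤ k) (hm : m ≤ k)
    (h : Config V k → Config V k → ℝ)
    (hlim : ∀ ξ : Config V k, inOmega c ξ → ∀ ζ : Config V k,
      Filter.Tendsto
        (fun t : ℝ => (NormedSpace.exp (t • clumpMatrix c k)).mulVec
          (fun ρ => if ρ = ξ then 1 else 0) ζ)
        Filter.atTop (nhds (h ξ ζ)))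
    (η ξ : Config V k) (hη : inOmega c η) (hηm : numStacks η = m)
    (hξ : inOmega c ξ) (hξm : numStacks ξ = m) :
    stackMeasure β η * rateM c β h η ξ = stackMeasure β ξ * rateM c β h ξ η := by
  classical
  by_cases hEq : ξ = η
  · subst hEq; rfl
  -- bracket function
  let brk : Config V k → ℝ := fun ζ =>
    h ξ ζ * (∑ ρ, rateA c β ζ ρ * (h η ρ - h η ζ))
      - h η ζ * (∑ ρ, rateA c β ζ ρ * (h ξ ρ - h ξ ζ))
  -- vanishing below level m
  have hcard : ∀ χ : Config V k, numStacks χ = m → (MDB.stks χ).card = m := by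
    intro χ hχ; rw [← MDB.numStacks_eq]; exact hχ
  have hsubcard : ∀ (χ ζ : Config V k), numStacks χ = m → numStacks ζ < m →
      ¬ MDB.stks χ ⊆ MDB.stks ζ := by
    intro χ ζ hχ hlt hsub
    have := Finset.card_le_card hsub
    rw [hcard χ hχ, ← MDB.numStacks_eq] at this
    omega
  have hvan : ∀ ζ : Config V k, numStacks ζ < m → brk ζ = 0 := by
    intro ζ hlt
    have h1 : h ξ ζ = 0 := MDB.h_zero_of_not_subset hlim hξ (hsubcard ξ ζ hξm hlt)
    have h2 : h η ζ = 0 := MDB.h_zero_of_not_subset hlim hη (hsubcard η ζ hηm hlt)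
    show h ξ ζ * _ - h η ζ * _ = 0
    rw [h1, h2, zero_mul, zero_mul, sub_zero]
  -- the identity for ε ≠ 0
  have hmid : ∀ ε : ℝ, ε ≠ 0 → ∑ ζ, MDB.mmu β ε ζ * brk ζ = 0 := fun ε hε =>
    MDB.mid_identity hlim hsymm hloop hξ hη ε hε
  -- the polynomial function
  set S : Finset (Config V k) := Finset.univ.filter (fun ζ => m ≤ numStacks ζ) with hS
  set p : ℝ → ℝ := fun ε => ∑ ζ ∈ S, ε ^ (numStacks ζ - m) * MDB.gg β ε ζ * brk ζ with hp
  have hpz : Set.EqOn p (fun _ => (0:ℝ)) (Set.Ioi (0:ℝ)) := by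
    intro ε hε
    have hε0 : ε ≠ 0 := ne_of_gt hε
    have h1 := hmid ε hε0
    have h2 : ∑ ζ, MDB.mmu β ε ζ * brk ζ = ∑ ζ ∈ S, MDB.mmu β ε ζ * brk ζ := by
      rw [← Finset.sum_filter_add_sum_filter_not Finset.univ
        (fun ζ => m ≤ numStacks ζ) (fun ζ => MDB.mmu β ε ζ * brk ζ)]
      have hz2 : ∑ ζ ∈ Finset.univ.filter (fun ζ => ¬ m ≤ numStacks ζ),
          MDB.mmu β ε ζ * brk ζ = 0 := by
        refine Finset.sum_eq_zero fun ζ hz => ?_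
        rw [Finset.mem_filter] at hz
        rw [hvan ζ (by omega), mul_zero]
      rw [hz2, add_zero]
    have h3 : ∑ ζ ∈ S, MDB.mmu β ε ζ * brk ζ = ε ^ m * p ε := by
      rw [hp, Finset.mul_sum]
      refine Finset.sum_congr rfl fun ζ hz => ?_
      rw [hS, Finset.mem_filter] at hz
      rw [MDB.mmu_eq]
      have he : ε ^ numStacks ζ = ε ^ m * ε ^ (numStacks ζ - m) := by
        rw [← pow_add]
        congr 1
        omega
      rw [he]; ring
    rw [h2, h3] at h1
    have := (mul_eq_zero.1 h1).resolve_left (pow_ne_zero m hε0)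
    simpa using this
  have hcont : Continuous p := by
    rw [hp]
    exact continuous_finset_sum _ fun ζ _ =>
      ((continuous_pow _).mul (MDB.gg_cont β ζ)).mul continuous_const
  have hp0 : p 0 = 0 := by
    have hcl := hpz.closure hcont continuous_const
    have h0m : (0:ℝ) ∈ closure (Set.Ioi (0:ℝ)) := by
      rw [closure_Ioi]; exact Set.self_mem_Ici
    exact hcl h0m
  -- membership facts
  have hξS : ξ ∈ S := by rw [hS, Finset.mem_filter]; exact ⟨Finset.mem_univ _, le_of_eq hξm.symm⟩
  have hηS : η ∈ S := by rw [hS, Finset.mem_filter]; exact ⟨Finset.mem_univ _, le_of_eq hηm.symm⟩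
  -- delta values of h on Omega at level m
  have hηξ0 : h η ξ = 0 := by
    rw [MDB.h_delta hlim hη (by rw [hξm, hηm])]
    exact if_neg hEq
  have hξη0 : h ξ η = 0 := by
    rw [MDB.h_delta hlim hξ (by rw [hηm, hξm])]
    exact if_neg (fun hh => hEq hh.symm)
  have hξξ1 : h ξ ξ = 1 := by
    rw [MDB.h_delta hlim hξ rfl]
    exact if_pos rfl
  have hηη1 : h η η = 1 := by
    rw [MDB.h_delta hlim hη rfl]
    exact if_pos rfl
  have hAη : (∑ ρ, rateA c β ξ ρ * (h η ρ - h η ξ)) = rateM c β h ξ η := by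
    rw [rateM]
    exact Finset.sum_congr rfl fun ρ _ => by rw [hηξ0, sub_zero]
  have hAξ : (∑ ρ, rateA c β η ρ * (h ξ ρ - h ξ η)) = rateM c β h η ξ := by
    rw [rateM]
    exact Finset.sum_congr rfl fun ρ _ => by rw [hξη0, sub_zero]
  -- evaluate p 0
  have heval : p 0 = stackMeasure β ξ * rateM c β h ξ η
      - stackMeasure β η * rateM c β h η ξ := by
    have hpe : p 0 = ∑ ζ ∈ S, (0:ℝ) ^ (numStacks ζ - m) * MDB.gg β 0 ζ * brk ζ := by rw [hp]
    have hterm : ∀ ζ ∈ S, (0:ℝ) ^ (numStacks ζ - m) * MDB.gg β 0 ζ * brk ζ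
        = (if ζ = ξ then stackMeasure β ξ * (∑ ρ, rateA c β ξ ρ * (h η ρ - h η ξ)) else 0)
          - (if ζ = η then stackMeasure β η * (∑ ρ, rateA c β η ρ * (h ξ ρ - h ξ η)) else 0) := by
      intro ζ hz
      rw [hS, Finset.mem_filter] at hz
      by_cases hNm : numStacks ζ = m
      · have h00 : (0:ℝ) ^ (numStacks ζ - m) = 1 := by rw [hNm, Nat.sub_self, pow_zero]
        rw [h00, one_mul, MDB.gg_zero]
        by_cases h1 : ζ = ξ
        · rw [h1]
          have hbζ : brk ξ = h ξ ξ * (∑ ρ, rateA c β ξ ρ * (h η ρ - h η ξ))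
              - h η ξ * (∑ ρ, rateA c β ξ ρ * (h ξ ρ - h ξ ξ)) := rfl
          rw [hbζ, hξξ1, hηξ0, if_pos rfl, if_neg hEq]
          ring
        · by_cases h2 : ζ = η
          · rw [h2]
            have hbζ : brk η = h ξ η * (∑ ρ, rateA c β η ρ * (h η ρ - h η η))
                - h η η * (∑ ρ, rateA c β η ρ * (h ξ ρ - h ξ η)) := rfl
            rw [hbζ, hηη1, hξη0, if_pos rfl, if_neg (fun hh => hEq hh.symm)]
            ring
          · have hδξ : h ξ ζ = 0 := by
              rw [MDB.h_delta hlim hξ (by rw [hNm, hξm])]; exact if_neg h1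
            have hδη : h η ζ = 0 := by
              rw [MDB.h_delta hlim hη (by rw [hNm, hηm])]; exact if_neg h2
            have hbζ : brk ζ = h ξ ζ * (∑ ρ, rateA c β ζ ρ * (h η ρ - h η ζ))
                - h η ζ * (∑ ρ, rateA c β ζ ρ * (h ξ ρ - h ξ ζ)) := rfl
            rw [hbζ, hδξ, hδη, if_neg h1, if_neg h2]
            ring
      · have h00 : (0:ℝ) ^ (numStacks ζ - m) = 0 := zero_pow (by omega)
        have hζξ : ζ ≠ ξ := fun he => hNm (by rw [he, hξm])
        have hζη : ζ ≠ η := fun he => hNm (by rw [he, hηm])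
        rw [h00, zero_mul, zero_mul, if_neg hζξ, if_neg hζη, sub_zero]
    rw [hpe, Finset.sum_congr rfl hterm, Finset.sum_sub_distrib,
      Finset.sum_ite_eq' S ξ, Finset.sum_ite_eq' S η, if_pos hξS, if_pos hηS, hAη, hAξ]
  rw [heval] at hp0
  linarith
end

section
/- Fix a finite connected weighted graph G and positive site weights α̂. For every integer k ≥ 3 and every function f : Ξ_k → ℝ that vanishes on Ξ_k \ Ω_{k,k}, define g : Ξ_{k−1} → ℝ by g(ξ) = sqrt( Σ_{x∈V} (α̂_x/|α̂|) f(ξ + δ_x)² ). Then g vanishes on Ξ_{k−1} \ Ω_{k−1,k−1}, and one has the identity ‖g‖²_{α̂,k−1} = ((|α̂|+k−1)/|α̂|) · ‖f‖²_{α̂,k} and the inequality E_{G,α̂,k−1}(g) ≤ ((|α̂|+k−1)/|α̂|) · E_{G,α̂,k}(f). -/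
open scoped BigOperators Classical

/-! Write `w = β / |β|` and `C = (|β| + k) / ((k + 1) |β|)`. The Dirichlet-multinomial weights
satisfy `μ_k(ξ) w_x = C μ_{k+1}(ξ + δ_x)` when `ξ_x = 0`, while `f (ξ + δ_x) = 0` when `ξ_x ≠ 0`.
Hence `Σ_ξ μ_k(ξ) g(ξ)²` counts every `η` in the support of `f` once per occupied site, that is
`k + 1` times, which is the norm identity.

For a jump `ξ → ξ'` from `x` to `y`, the reverse triangle inequality in `ℓ²(w)` bounds
`(g ξ' - g ξ)²` by `Σ_z w_z (f (ξ' + δ_z) - f (ξ + δ_z))²`. The terms with `z` occupied or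
`z ∈ {x, y}` vanish, since then one of the two configurations has a stacked or an adjacent pair
of particles; every other term is `C` times the jump term of `f` at `ξ + δ_z` along the same
edge. Counting as before, now with at most `k + 1` occupied sites, gives the Dirichlet bound. -/

lemma sq_sqrt_sum_sub_sqrt_sum_le {ι : Type*} [Fintype ι] {w : ι → ℝ} (hw : ∀ i, 0 ≤ w i)
    (u v : ι → ℝ) :
    (√(∑ i, w i * u i ^ 2) - √(∑ i, w i * v i ^ 2)) ^ 2 ≤ ∑ i, w i * (u i - v i) ^ 2 := by
  let emb : (ι → ℝ) → EuclideanSpace ℝ ι := fun a => WithLp.toLp 2 fun i => √(w i) * a i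
  have hnorm : ∀ a, ‖emb a‖ = √(∑ i, w i * a i ^ 2) := fun a => by
    simp [emb, EuclideanSpace.norm_eq, mul_pow, Real.sq_sqrt (hw _)]
  have hsub : emb u - emb v = emb (u - v) := by
    ext i; simp [emb, mul_sub]
  have key : (‖emb u‖ - ‖emb v‖) ^ 2 ≤ ‖emb u - emb v‖ ^ 2 := by
    rw [← sq_abs]
    gcongr
    exact abs_norm_sub_norm_le _ _
  rwa [hsub, hnorm, hnorm, hnorm, Real.sq_sqrt (Finset.sum_nonneg fun i _ =>
    mul_nonneg (hw i) (sq_nonneg _))] at key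

namespace Config

variable {V : Type*} [Fintype V] [DecidableEq V] {k : ℕ}

omit [DecidableEq V] in
lemma ext {η ζ : Config V k} (h : ∀ z, η.1 z = ζ.1 z) : η = ζ :=
  Subtype.ext (funext h)

@[simp]
lemma addOne_apply (ξ : Config V k) (x z : V) :
    (ξ.addOne x).1 z = ξ.1 z + if z = x then 1 else 0 := rfl

lemma move_of_eq_zero (η : Config V k) {x : V} (y : V) (h : η.1 x = 0) : η.move x y = η :=
  dif_pos h

lemma move_apply (η : Config V k) {x : V} (y z : V) (h : η.1 x ≠ 0) :
    (η.move x y).1 z = η.1 z - (if z = x then 1 else 0) + if z = y then 1 else 0 := by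
  simp [move, h]

lemma addOne_move_comm (ξ : Config V k) {x z : V} (y : V) (hzx : z ≠ x) :
    (ξ.move x y).addOne z = (ξ.addOne z).move x y := by
  by_cases hx : ξ.1 x = 0
  · rw [ξ.move_of_eq_zero y hx, (ξ.addOne z).move_of_eq_zero y (by simp [hx, hzx.symm])]
  · refine ext fun w => ?_
    rw [addOne_apply, ξ.move_apply y w hx, (ξ.addOne z).move_apply y w (by simp [hx, hzx.symm]),
      addOne_apply]
    split_ifs <;> subst_vars <;> omega

lemma addOne_left_injective (x : V) : Function.Injective fun ξ : Config V k => ξ.addOne x :=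
  fun ξ ζ h => ext fun z => by simpa using congrArg (fun η : Config V (k + 1) => η.1 z) h

def remOne (η : Config V (k + 1)) (x : V) (h : η.1 x ≠ 0) : Config V k :=
  ⟨fun z => η.1 z - if z = x then 1 else 0, by
    rw [Finset.sum_tsub_distrib _ fun z _ => by by_cases hz : z = x <;> simp [hz]; omega, η.2]
    simp⟩

lemma addOne_remOne (η : Config V (k + 1)) (x : V) (h : η.1 x ≠ 0) :
    (η.remOne x h).addOne x = η :=
  ext fun z => by
    show (η.1 z - _) + _ = _
    by_cases hz : z = x
    · subst hz; simp only [if_true]; omega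
    · simp [hz]

lemma sum_sum_addOne (F : Config V (k + 1) → ℝ) :
    ∑ ξ : Config V k, ∑ x, F (ξ.addOne x) = ∑ η, (numStacks η : ℝ) * F η := by
  calc ∑ ξ : Config V k, ∑ x, F (ξ.addOne x)
      = ∑ p : Config V k × V, F (p.1.addOne p.2) := (Fintype.sum_prod_type' _).symm
    _ = ∑ q ∈ Finset.univ.filter fun q : Config V (k + 1) × V => 0 < q.1.1 q.2, F q.1 := by
        refine Finset.sum_bij (fun p _ => (p.1.addOne p.2, p.2)) (by simp)
          (fun ⟨ξ, x⟩ _ ⟨ζ, y⟩ _ h => ?_) (fun q hq => ?_) (fun _ _ => rfl)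
        · obtain ⟨h, rfl⟩ := Prod.mk.inj h
          exact Prod.ext (addOne_left_injective x h) rfl
        · have hq : q.1.1 q.2 ≠ 0 := (Finset.mem_filter.1 hq).2.ne'
          exact ⟨(q.1.remOne q.2 hq, q.2), Finset.mem_univ _, by simp [addOne_remOne]⟩
    _ = ∑ η, (numStacks η : ℝ) * F η := by
        rw [Finset.sum_filter, Fintype.sum_prod_type]
        simp only [← Finset.sum_filter, Finset.sum_const, nsmul_eq_mul, numStacks]

end Config

noncomputable section Measure

variable {V : Type*} [Fintype V] [DecidableEq V] {k : ℕ}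

/-- The site factors of `sipMeasure` and its normalisation `sipZ α k` are all of this form:
`sipZ α k = siteWeight (∑ x, α x) k`. -/
def siteWeight (a : ℝ) (n : ℕ) : ℝ :=
  Real.Gamma (a + n) / (Real.Gamma a * n.factorial)

lemma siteWeight_nonneg {a : ℝ} (ha : 0 ≤ a) (n : ℕ) : 0 ≤ siteWeight a n :=
  div_nonneg (Real.Gamma_nonneg_of_nonneg (by positivity))
    (mul_nonneg (Real.Gamma_nonneg_of_nonneg ha) (Nat.cast_nonneg _))

lemma siteWeight_pos {a : ℝ} (ha : 0 < a) (n : ℕ) : 0 < siteWeight a n :=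
  div_pos (Real.Gamma_pos_of_pos (by positivity))
    (mul_pos (Real.Gamma_pos_of_pos ha) (Nat.cast_pos.2 n.factorial_pos))

lemma siteWeight_succ {a : ℝ} {n : ℕ} (h : a + n ≠ 0) :
    siteWeight a (n + 1) = siteWeight a n * ((a + n) / (n + 1)) := by
  rw [siteWeight, siteWeight, Nat.cast_succ, ← add_assoc, Real.Gamma_add_one h,
    Nat.factorial_succ, Nat.cast_mul, Nat.cast_succ]
  field_simp

omit [DecidableEq V] in
lemma sipMeasure_eq_prod (α : V → ℝ) (η : Config V k) :
    sipMeasure α η = (siteWeight (∑ z, α z) k)⁻¹ * ∏ z, siteWeight (α z) (η.1 z) :=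
  rfl

omit [DecidableEq V] in
lemma sipMeasure_nonneg {α : V → ℝ} (hα : ∀ x, 0 ≤ α x) (η : Config V k) :
    0 ≤ sipMeasure α η :=
  mul_nonneg (inv_nonneg.2 (siteWeight_nonneg (Finset.sum_nonneg fun x _ => hα x) k))
    (Finset.prod_nonneg fun x _ => siteWeight_nonneg (hα x) _)

lemma sipMeasure_addOne {α : V → ℝ} (hα : ∀ x, 0 < α x) (ξ : Config V k) (x : V) :
    sipMeasure α (ξ.addOne x)
      = sipMeasure α ξ * ((k + 1) / ((∑ z, α z) + k)) * ((α x + ξ.1 x) / (ξ.1 x + 1)) := by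
  have hsum : 0 < ∑ z, α z := Finset.sum_pos (fun z _ => hα z) ⟨x, Finset.mem_univ x⟩
  have hsite : ∀ z, siteWeight (α z) ((ξ.addOne x).1 z)
      = siteWeight (α z) (ξ.1 z) * if z = x then (α x + ξ.1 x) / (ξ.1 x + 1) else 1 := by
    intro z
    by_cases hz : z = x
    · subst hz
      simp only [Config.addOne_apply, if_true]
      exact siteWeight_succ (by have := hα z; positivity)
    · simp [hz]
  rw [sipMeasure_eq_prod, sipMeasure_eq_prod, Finset.prod_congr rfl fun z _ => hsite z,
    Finset.prod_mul_distrib, Finset.prod_ite_eq', if_pos (Finset.mem_univ x),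
    siteWeight_succ (by positivity)]
  have := (siteWeight_pos hsum k).ne'
  field_simp

lemma sipMeasure_mul_div_sum {α : V → ℝ} (hα : ∀ x, 0 < α x) (ξ : Config V k) {x : V}
    (hx : ξ.1 x = 0) :
    sipMeasure α ξ * (α x / ∑ z, α z)
      = ((∑ z, α z) + k) / ((k + 1) * ∑ z, α z) * sipMeasure α (ξ.addOne x) := by
  have hsum : 0 < ∑ z, α z := Finset.sum_pos (fun z _ => hα z) ⟨x, Finset.mem_univ x⟩
  have : 0 < (∑ z, α z) + k := by positivity
  rw [sipMeasure_addOne hα, hx, Nat.cast_zero, add_zero, zero_add, div_one]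
  field_simp

end Measure

section Isolated

variable {V : Type*} [Fintype V] {c : V → V → ℝ} {k : ℕ}

lemma numStacks_le (η : Config V k) : numStacks η ≤ k := by
  calc numStacks η = ∑ z ∈ Finset.univ.filter fun x => 0 < η.1 x, 1 := Finset.card_eq_sum_ones _
    _ ≤ ∑ z ∈ Finset.univ.filter fun x => 0 < η.1 x, η.1 z :=
        Finset.sum_le_sum fun z hz => (Finset.mem_filter.1 hz).2
    _ ≤ ∑ z, η.1 z := Finset.sum_le_sum_of_subset (Finset.filter_subset _ _)
    _ = k := η.2

lemma numStacks_eq_iff_le_one (η : Config V k) : numStacks η = k ↔ ∀ z, η.1 z ≤ 1 := by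
  set s := Finset.univ.filter fun x => 0 < η.1 x
  have hk : ∑ z ∈ s, η.1 z = k := by
    rw [Finset.sum_filter_of_ne fun z _ hz => Nat.pos_of_ne_zero hz, η.2]
  have hcard : numStacks η = k ↔ ∑ z ∈ s, 1 = ∑ z ∈ s, η.1 z := by
    rw [hk, numStacks, Finset.card_eq_sum_ones]
  rw [hcard, Finset.sum_eq_sum_iff_of_le (s := s) fun z hz => (Finset.mem_filter.1 hz).2]
  refine ⟨fun h z => ?_, fun h z hz => ?_⟩
  · by_cases hz : 0 < η.1 z
    · exact (h z (Finset.mem_filter.2 ⟨Finset.mem_univ z, hz⟩)).ge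
    · omega
  · have := (Finset.mem_filter.1 hz).2
    have := h z
    omega

/-- The set `Ω_{k,k}`. -/
def IsIsolated (c : V → V → ℝ) (η : Config V k) : Prop :=
  inOmega c η ∧ numStacks η = k

lemma IsIsolated.of_le {k' : ℕ} {ξ : Config V k} {η : Config V k'} (hη : IsIsolated c η)
    (hle : ∀ z, ξ.1 z ≤ η.1 z) : IsIsolated c ξ := by
  refine ⟨fun x y => ?_, (numStacks_eq_iff_le_one ξ).2 fun z =>
    (hle z).trans ((numStacks_eq_iff_le_one η).1 hη.2 z)⟩
  by_cases hx : ξ.1 x = 0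
  · simp [hx]
  by_cases hy : ξ.1 y = 0
  · simp [hy]
  have hηx : η.1 x ≠ 0 := by have := hle x; omega
  have hηy : η.1 y ≠ 0 := by have := hle y; omega
  have hc : c x y = 0 := by simpa [hηx, hηy] using hη.1 x y
  simp [hc]

lemma apply_eq_zero_of_one_lt {f : Config V k → ℝ} (hf : ∀ η, ¬IsIsolated c η → f η = 0)
    {η : Config V k} {z : V} (hz : 1 < η.1 z) : f η = 0 :=
  hf η fun hη => by have := (numStacks_eq_iff_le_one η).1 hη.2 z; omega

lemma apply_eq_zero_of_adj {f : Config V k → ℝ} (hf : ∀ η, ¬IsIsolated c η → f η = 0)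
    {η : Config V k} {x y : V} (hc : c x y ≠ 0) (hx : η.1 x ≠ 0) (hy : η.1 y ≠ 0) : f η = 0 :=
  hf η fun hη => by simpa [hc, hx, hy] using hη.1 x y

end Isolated

noncomputable section Comparison

variable {V : Type*} [Fintype V] [DecidableEq V] {c : V → V → ℝ} {β : V → ℝ} {k : ℕ}

/-- The function `g` of the statement. -/
def rmsAddOne (β : V → ℝ) (f : Config V (k + 1) → ℝ) (ξ : Config V k) : ℝ :=
  √(∑ x, (β x / ∑ z, β z) * f (ξ.addOne x) ^ 2)

def dirichletTerm (c : V → V → ℝ) (β : V → ℝ) (f : Config V k → ℝ) (η : Config V k)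
    (x y : V) : ℝ :=
  sipMeasure β η * (c x y * η.1 x * (β y + η.1 y) * (f (η.move x y) - f η) ^ 2)

lemma dirichletTerm_nonneg (hc : ∀ x y, 0 ≤ c x y) (hβ : ∀ x, 0 ≤ β x) (f : Config V k → ℝ)
    (η : Config V k) (x y : V) : 0 ≤ dirichletTerm c β f η x y := by
  have := hc x y
  have := hβ y
  unfold dirichletTerm
  have := sipMeasure_nonneg hβ η
  positivity

lemma apply_addOne_eq_zero_of_not_free {f : Config V (k + 1) → ℝ}
    (hf : ∀ η, ¬IsIsolated c η → f η = 0) {ξ : Config V k} {x y z : V} (hc : c x y ≠ 0)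
    (hx : ξ.1 x ≠ 0) (hz : ¬(ξ.1 z = 0 ∧ z ≠ x ∧ z ≠ y)) :
    f (ξ.addOne z) = 0 ∧ f ((ξ.move x y).addOne z) = 0 := by
  have hy : (ξ.move x y).1 y ≠ 0 := by simp [ξ.move_apply y y hx]
  have twice : ∀ η : Config V k, η.1 z ≠ 0 → f (η.addOne z) = 0 := fun η h =>
    apply_eq_zero_of_one_lt hf (z := z) (by simp only [Config.addOne_apply, if_true]; omega)
  by_cases hzx : z = x
  · subst hzx
    exact ⟨twice ξ hx, apply_eq_zero_of_adj hf hc (by simp) (by simp [hy])⟩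
  by_cases hzy : z = y
  · subst hzy
    exact ⟨apply_eq_zero_of_adj hf hc (by simp [hx]) (by simp), twice _ hy⟩
  have hξz : ξ.1 z ≠ 0 := by tauto
  exact ⟨twice ξ hξz, twice _ (by simp [ξ.move_apply y z hx, hzx, hzy, hξz])⟩

lemma rmsAddOne_eq_zero_of_not_isolated {f : Config V (k + 1) → ℝ}
    (hf : ∀ η, ¬IsIsolated c η → f η = 0) {ξ : Config V k} (hξ : ¬IsIsolated c ξ) :
    rmsAddOne β f ξ = 0 := by
  have hzero : ∀ x, f (ξ.addOne x) = 0 := fun x => by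
    by_contra hfx
    exact hξ ((not_not.1 (mt (hf _) hfx)).of_le fun z => by simp)
  simp [rmsAddOne, hzero]

lemma sipMeasure_mul_div_sum_mul_sq (hβ : ∀ x, 0 < β x) {f : Config V (k + 1) → ℝ}
    (hf : ∀ η, ¬IsIsolated c η → f η = 0) (ξ : Config V k) (x : V) :
    sipMeasure β ξ * (β x / ∑ z, β z) * f (ξ.addOne x) ^ 2
      = ((∑ z, β z) + k) / ((k + 1) * ∑ z, β z) *
          (sipMeasure β (ξ.addOne x) * f (ξ.addOne x) ^ 2) := by
  by_cases hx : ξ.1 x = 0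
  · rw [sipMeasure_mul_div_sum hβ ξ hx]
    ring
  · rw [apply_eq_zero_of_one_lt hf (z := x) (by simp only [Config.addOne_apply, if_true]; omega)]
    ring

theorem sipNormSq_rmsAddOne (hβ : ∀ x, 0 < β x) {f : Config V (k + 1) → ℝ}
    (hf : ∀ η, ¬IsIsolated c η → f η = 0) :
    sipNormSq β (rmsAddOne β f) = ((∑ z, β z) + k) / (∑ z, β z) * sipNormSq β f := by
  have hw : ∀ x, 0 ≤ β x / ∑ z, β z := fun x =>
    div_nonneg (hβ x).le (Finset.sum_nonneg fun z _ => (hβ z).le)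
  have hsq : ∀ ξ, rmsAddOne β f ξ ^ 2 = ∑ x, (β x / ∑ z, β z) * f (ξ.addOne x) ^ 2 := fun ξ =>
    Real.sq_sqrt (Finset.sum_nonneg fun x _ => mul_nonneg (hw x) (sq_nonneg _))
  have hcount : ∀ η : Config V (k + 1),
      (numStacks η : ℝ) * (sipMeasure β η * f η ^ 2) = (k + 1) * (sipMeasure β η * f η ^ 2) := by
    intro η
    by_cases hη : IsIsolated c η
    · rw [hη.2]; push_cast; ring
    · simp [hf η hη]
  calc sipNormSq β (rmsAddOne β f)
      = ∑ ξ : Config V k, ∑ x, sipMeasure β ξ * (β x / ∑ z, β z) * f (ξ.addOne x) ^ 2 := by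
        simp only [sipNormSq, hsq, Finset.mul_sum, mul_assoc]
    _ = ((∑ z, β z) + k) / ((k + 1) * ∑ z, β z) *
          ∑ η, (numStacks η : ℝ) * (sipMeasure β η * f η ^ 2) := by
        simp only [sipMeasure_mul_div_sum_mul_sq hβ hf, ← Finset.mul_sum]
        rw [Config.sum_sum_addOne fun η => sipMeasure β η * f η ^ 2]
    _ = _ := by
        rw [Finset.sum_congr rfl fun η _ => hcount η, ← Finset.mul_sum, ← mul_assoc,
          div_mul_eq_mul_div, mul_comm _ ((k : ℝ) + 1), mul_div_mul_left _ _ (by positivity),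
          sipNormSq]

lemma sipMeasure_mul_div_sum_mul_jump_le (hc : ∀ x y, 0 ≤ c x y) (hβ : ∀ x, 0 < β x)
    {f : Config V (k + 1) → ℝ} (hf : ∀ η, ¬IsIsolated c η → f η = 0) {ξ : Config V k}
    {x y : V} (hcxy : c x y ≠ 0) (hx : ξ.1 x ≠ 0) (z : V) :
    sipMeasure β ξ * (β z / ∑ z, β z) * (c x y * ξ.1 x * (β y + ξ.1 y) *
        (f ((ξ.move x y).addOne z) - f (ξ.addOne z)) ^ 2)
      ≤ ((∑ z, β z) + k) / ((k + 1) * ∑ z, β z) * dirichletTerm c β f (ξ.addOne z) x y := by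
  by_cases hfree : ξ.1 z = 0 ∧ z ≠ x ∧ z ≠ y
  · obtain ⟨hz, hzx, hzy⟩ := hfree
    rw [sipMeasure_mul_div_sum hβ ξ hz, dirichletTerm, ← ξ.addOne_move_comm y hzx]
    simp only [Config.addOne_apply, if_neg hzx.symm, if_neg hzy.symm, add_zero]
    exact le_of_eq (by ring)
  · obtain ⟨h₁, h₂⟩ := apply_addOne_eq_zero_of_not_free hf hcxy hx hfree
    have : 0 ≤ ∑ z, β z := Finset.sum_nonneg fun z _ => (hβ z).le
    rw [h₁, h₂, sub_zero, zero_pow two_ne_zero, mul_zero, mul_zero]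
    exact mul_nonneg (by positivity) (dirichletTerm_nonneg hc (fun x => (hβ x).le) _ _ _ _)

lemma dirichletTerm_rmsAddOne_le (hc : ∀ x y, 0 ≤ c x y) (hβ : ∀ x, 0 < β x)
    {f : Config V (k + 1) → ℝ} (hf : ∀ η, ¬IsIsolated c η → f η = 0) (ξ : Config V k)
    (x y : V) :
    dirichletTerm c β (rmsAddOne β f) ξ x y
      ≤ ((∑ z, β z) + k) / ((k + 1) * ∑ z, β z) * ∑ z, dirichletTerm c β f (ξ.addOne z) x y := by
  have hS : 0 ≤ ∑ z, β z := Finset.sum_nonneg fun z _ => (hβ z).le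
  have hRHS : 0 ≤ ((∑ z, β z) + k) / ((k + 1) * ∑ z, β z) *
      ∑ z, dirichletTerm c β f (ξ.addOne z) x y :=
    mul_nonneg (by positivity) (Finset.sum_nonneg fun z _ =>
      dirichletTerm_nonneg hc (fun x => (hβ x).le) _ _ _ _)
  by_cases hdeg : c x y = 0 ∨ ξ.1 x = 0
  · have : dirichletTerm c β (rmsAddOne β f) ξ x y = 0 := by
      rcases hdeg with h | h <;> simp [dirichletTerm, h]
    exact this ▸ hRHS
  obtain ⟨hcxy, hx⟩ := not_or.1 hdeg
  set a := c x y * ξ.1 x * (β y + ξ.1 y)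
  have ha : 0 ≤ sipMeasure β ξ * a := by
    have := hc x y
    have := hβ y
    have := sipMeasure_nonneg (fun x => (hβ x).le) ξ
    positivity
  calc dirichletTerm c β (rmsAddOne β f) ξ x y
      = sipMeasure β ξ * a * (rmsAddOne β f (ξ.move x y) - rmsAddOne β f ξ) ^ 2 := by
        rw [dirichletTerm, ← mul_assoc, mul_assoc (sipMeasure β ξ)]
    _ ≤ sipMeasure β ξ * a *
          ∑ z, (β z / ∑ z, β z) * (f ((ξ.move x y).addOne z) - f (ξ.addOne z)) ^ 2 := by
        gcongr
        exact sq_sqrt_sum_sub_sqrt_sum_le (fun z => div_nonneg (hβ z).le hS) _ _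
    _ = ∑ z, sipMeasure β ξ * (β z / ∑ z, β z) *
          (a * (f ((ξ.move x y).addOne z) - f (ξ.addOne z)) ^ 2) := by
        rw [Finset.mul_sum]
        exact Finset.sum_congr rfl fun z _ => by ring
    _ ≤ _ := by
        rw [Finset.mul_sum]
        exact Finset.sum_le_sum fun z _ => sipMeasure_mul_div_sum_mul_jump_le hc hβ hf hcxy hx z

theorem dirichletForm_rmsAddOne_le (hc : ∀ x y, 0 ≤ c x y) (hβ : ∀ x, 0 < β x)
    {f : Config V (k + 1) → ℝ} (hf : ∀ η, ¬IsIsolated c η → f η = 0) :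
    dirichletForm c β (rmsAddOne β f) ≤ ((∑ z, β z) + k) / (∑ z, β z) * dirichletForm c β f := by
  set C := ((∑ z, β z) + k) / ((k + 1) * ∑ z, β z)
  have hC : 0 ≤ C := by
    have : 0 ≤ ∑ z, β z := Finset.sum_nonneg fun z _ => (hβ z).le
    positivity
  set F : Config V (k + 1) → ℝ := fun η => ∑ x, ∑ y, dirichletTerm c β f η x y
  have hF : ∀ η, 0 ≤ F η := fun η => Finset.sum_nonneg fun x _ => Finset.sum_nonneg fun y _ =>
    dirichletTerm_nonneg hc (fun x => (hβ x).le) _ _ _ _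
  calc dirichletForm c β (rmsAddOne β f)
      = 1 / 2 * ∑ ξ, ∑ x, ∑ y, dirichletTerm c β (rmsAddOne β f) ξ x y := rfl
    _ ≤ 1 / 2 * ∑ ξ : Config V k, C * ∑ z, F (ξ.addOne z) := by
        gcongr with ξ
        calc ∑ x, ∑ y, dirichletTerm c β (rmsAddOne β f) ξ x y
            ≤ ∑ x, ∑ y, C * ∑ z, dirichletTerm c β f (ξ.addOne z) x y := by
              gcongr with x _ y
              exact dirichletTerm_rmsAddOne_le hc hβ hf ξ x y
          _ = C * ∑ z, F (ξ.addOne z) := by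
              simp only [F, Finset.mul_sum]
              exact (Finset.sum_congr rfl fun x _ => Finset.sum_comm).trans Finset.sum_comm
    _ = 1 / 2 * C * ∑ η, (numStacks η : ℝ) * F η := by
        rw [← Finset.mul_sum, Config.sum_sum_addOne, mul_assoc]
    _ ≤ 1 / 2 * C * ∑ η, (k + 1 : ℝ) * F η := by
        gcongr with η
        · exact hF η
        · exact_mod_cast (numStacks_le η)
    _ = _ := by
        have hCk : C * (k + 1) = ((∑ z, β z) + k) / ∑ z, β z := by
          rw [div_mul_eq_mul_div, mul_comm _ ((k : ℝ) + 1), mul_div_mul_left _ _ (by positivity)]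
        rw [← Finset.mul_sum, ← hCk, show dirichletForm c β f = 1 / 2 * ∑ η, F η from rfl]
        ring

end Comparison

theorem kill_adjacent_comparison_step_general
    {V : Type*} [Fintype V] [DecidableEq V] (c : V → V → ℝ) (β : V → ℝ)
    (hnonneg : ∀ x y, 0 ≤ c x y)
    (hβ : ∀ x, 0 < β x) (j : ℕ)
    (f : Config V (j + 1) → ℝ)
    (hf : ∀ η : Config V (j + 1), ¬(inOmega c η ∧ numStacks η = j + 1) → f η = 0)
    (g : Config V j → ℝ)
    (hg : g = fun ξ => Real.sqrt (∑ x, (β x / (∑ z, β z)) * (f (ξ.addOne x)) ^ 2)) :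
    (∀ ξ : Config V j, ¬(inOmega c ξ ∧ numStacks ξ = j) → g ξ = 0) ∧
    sipNormSq β g = (((∑ z, β z) + (j + 1 : ℝ) - 1) / (∑ z, β z)) * sipNormSq β f ∧
    dirichletForm c β g ≤ (((∑ z, β z) + (j + 1 : ℝ) - 1) / (∑ z, β z)) *
      dirichletForm c β f := by
  change g = rmsAddOne β f at hg
  subst hg
  rw [show (∑ z, β z) + (j + 1 : ℝ) - 1 = (∑ z, β z) + j by ring]
  exact ⟨fun ξ => rmsAddOne_eq_zero_of_not_isolated hf, sipNormSq_rmsAddOne hβ hf,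
    dirichletForm_rmsAddOne_le hnonneg hβ hf⟩

theorem kill_adjacent_comparison_step
    {V : Type*} [Fintype V] [DecidableEq V] (c : V → V → ℝ) (β : V → ℝ)
    (hsymm : ∀ x y, c x y = c y x) (hnonneg : ∀ x y, 0 ≤ c x y)
    (hloop : ∀ x, c x x = 0) (hconn : (graphOf c).Connected)
    (hβ : ∀ x, 0 < β x) (j : ℕ) (hj : 2 ≤ j)
    (f : Config V (j + 1) → ℝ)
    (hf : ∀ η : Config V (j + 1), ¬(inOmega c η ∧ numStacks η = j + 1) → f η = 0)
    (g : Config V j → ℝ)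
    (hg : g = fun ξ => Real.sqrt (∑ x, (β x / (∑ z, β z)) * (f (ξ.addOne x)) ^ 2)) :
    (∀ ξ : Config V j, ¬(inOmega c ξ ∧ numStacks ξ = j) → g ξ = 0) ∧
    sipNormSq β g = (((∑ z, β z) + (j + 1 : ℝ) - 1) / (∑ z, β z)) * sipNormSq β f ∧
    dirichletForm c β g ≤ (((∑ z, β z) + (j + 1 : ℝ) - 1) / (∑ z, β z)) *
      dirichletForm c β f :=
  kill_adjacent_comparison_step_general c β hnonneg hβ j f hf g hg
end

section
/- Fix a finite connected weighted graph G and positive site weights α̂. For every integer k ≥ 2 such that Ω_{k,k} ≠ ∅, one has inf{ E_{G,α̂,k}(f) / ‖f‖²_{α̂,k} : f : Ξ_k → ℝ, f ≠ 0, f = 0 on Ξ_k \ Ω_{k,k} } ≥ inf{ E_{G,α̂,2}(f) / ‖f‖²_{α̂,2} : f : Ξ_2 → ℝ, f ≠ 0, f = 0 on Ξ_2 \ Ω_{2,2} }, i.e. λ_{k,k}(α̂) ≥ λ_{2,2}(α̂) in the variational characterization of the lowest eigenvalue of the k-particle system killed upon two particles becoming adjacent. -/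
open scoped BigOperators Classical

noncomputable section AuxProof
open Finset

namespace SIPaux

variable {V : Type*} [Fintype V] [DecidableEq V]

lemma cfg_ext {n : ℕ} {η ζ : Config V n} (h : ∀ z, η.1 z = ζ.1 z) : η = ζ :=
  Subtype.ext (funext h)

lemma move_apply {n : ℕ} (η : Config V n) {x : V} (h : η.1 x ≠ 0) (y z : V) :
    (η.move x y).1 z = η.1 z - (if z = x then 1 else 0) + (if z = y then 1 else 0) := by
  exact congrArg (fun θ : Config V n => θ.1 z) (dif_neg h : η.move x y = _)

lemma move_zero {n : ℕ} (η : Config V n) {x : V} (h : η.1 x = 0) (y : V) :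
    η.move x y = η := dif_pos h

lemma move_self {n : ℕ} (η : Config V n) (x : V) : η.move x x = η := by
  by_cases h : η.1 x = 0
  · exact dif_pos h
  · apply cfg_ext; intro z
    rw [move_apply η h]
    by_cases hz : z = x
    · rcases Nat.exists_eq_succ_of_ne_zero h with ⟨a, ha⟩
      rw [hz, if_pos rfl, ha]
      omega
    · simp [hz]

lemma move_src {n : ℕ} (η : Config V n) {x y : V} (h : η.1 x ≠ 0) (hxy : x ≠ y) :
    (η.move x y).1 x = η.1 x - 1 := by
  rw [move_apply η h]; simp [hxy]

lemma move_tgt {n : ℕ} (η : Config V n) {x y : V} (h : η.1 x ≠ 0) (hxy : x ≠ y) :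
    (η.move x y).1 y = η.1 y + 1 := by
  rw [move_apply η h]; simp [Ne.symm hxy]

lemma move_other {n : ℕ} (η : Config V n) {x y z : V} (h : η.1 x ≠ 0)
    (hzx : z ≠ x) (hzy : z ≠ y) : (η.move x y).1 z = η.1 z := by
  rw [move_apply η h]; simp [hzx, hzy]

lemma move_move {n : ℕ} (η : Config V n) {x y : V} (h : η.1 x ≠ 0) :
    (η.move x y).move y x = η := by
  by_cases hxy : x = y
  · subst hxy; rw [move_self, move_self]
  · have h2 : (η.move x y).1 y ≠ 0 := by rw [move_tgt η h hxy]; omega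
    apply cfg_ext; intro z
    rw [move_apply _ h2]
    by_cases hzy : z = y
    · rw [hzy, move_tgt η h hxy, if_pos rfl, if_neg (Ne.symm hxy)]
      omega
    · by_cases hzx : z = x
      · rw [hzx, move_src η h hxy, if_neg hxy, if_pos rfl]
        omega
      · rw [move_other η h hzx hzy, if_neg hzy, if_neg hzx]
        omega

/-- combine a 2-particle and an `m`-particle configuration. -/
def pairAdd {m : ℕ} (ξ : Config V 2) (ρ : Config V m) : Config V (m + 2) :=
  ⟨fun z => ξ.1 z + ρ.1 z, by rw [Finset.sum_add_distrib, ξ.2, ρ.2]; omega⟩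

lemma pairAdd_apply {m : ℕ} (ξ : Config V 2) (ρ : Config V m) (z : V) :
    (pairAdd ξ ρ).1 z = ξ.1 z + ρ.1 z := rfl

lemma pairAdd_move {m : ℕ} (ξ : Config V 2) (ρ : Config V m) {x : V}
    (h : ξ.1 x ≠ 0) (y : V) :
    pairAdd (ξ.move x y) ρ = (pairAdd ξ ρ).move x y := by
  have h' : (pairAdd ξ ρ).1 x ≠ 0 := by rw [pairAdd_apply]; omega
  apply cfg_ext; intro z
  rw [move_apply _ h', pairAdd_apply, pairAdd_apply, move_apply _ h]
  have hx : ξ.1 x ≥ 1 := Nat.one_le_iff_ne_zero.2 h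
  by_cases hzx : z = x
  · subst hzx
    by_cases hzy : z = y
    · rw [if_pos rfl, if_pos hzy]; omega
    · rw [if_pos rfl, if_neg hzy]; omega
  · by_cases hzy : z = y
    · rw [if_neg hzx, if_pos hzy]; omega
    · rw [if_neg hzx, if_neg hzy]; omega

lemma simple_of_numStacks {n : ℕ} {η : Config V n} (h : numStacks η = n) :
    ∀ z, η.1 z ≤ 1 := by
  classical
  have hsum : ∑ z ∈ univ.filter (fun z => 0 < η.1 z), η.1 z = n := by
    rw [Finset.sum_filter_of_ne (fun z _ hz => by omega)]
    exact η.2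
  have hcard : (univ.filter fun z => 0 < η.1 z).card = n := h
  have hle : ∀ z ∈ univ.filter (fun z => 0 < η.1 z), 1 ≤ η.1 z :=
    fun z hz => (mem_filter.1 hz).2
  have hkey : ∀ z ∈ univ.filter (fun z => 0 < η.1 z), 1 = η.1 z := by
    refine (Finset.sum_eq_sum_iff_of_le hle).1 ?_
    rw [Finset.sum_const, smul_eq_mul, mul_one, hcard, hsum]
  intro z
  by_cases hz : 0 < η.1 z
  · exact le_of_eq (hkey z (mem_filter.2 ⟨mem_univ z, hz⟩)).symm
  · omega

lemma numStacks_of_simple {n : ℕ} {η : Config V n} (h : ∀ z, η.1 z ≤ 1) :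
    numStacks η = n := by
  classical
  show (univ.filter fun z => 0 < η.1 z).card = n
  rw [Finset.card_eq_sum_ones]
  rw [Finset.sum_congr rfl (fun z hz => by
    have h1 := (mem_filter.1 hz).2; have h2 := h z
    omega : ∀ z ∈ univ.filter (fun z => 0 < η.1 z), 1 = η.1 z)]
  rw [Finset.sum_filter_of_ne (fun z _ hz => by omega)]
  exact η.2

end SIPaux
end AuxProof
noncomputable section AuxProof2
open Finset

namespace SIPaux

variable {V : Type*} [Fintype V] [DecidableEq V]

/-- single-site measure factor. -/
def gfun (β : V → ℝ) (z : V) (n : ℕ) : ℝ :=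
  Real.Gamma (β z + n) / (Real.Gamma (β z) * (Nat.factorial n : ℝ))

lemma sipMeasure_def' (β : V → ℝ) {n : ℕ} (η : Config V n) :
    sipMeasure β η = (sipZ β n)⁻¹ * ∏ z, gfun β z (η.1 z) := rfl

lemma gfun_pos {β : V → ℝ} (hβ : ∀ x, 0 < β x) (z : V) (n : ℕ) : 0 < gfun β z n := by
  have h1 := hβ z
  exact div_pos (Real.Gamma_pos_of_pos (by positivity))
    (mul_pos (Real.Gamma_pos_of_pos h1) (by positivity))

lemma gfun_zero {β : V → ℝ} (hβ : ∀ x, 0 < β x) (z : V) : gfun β z 0 = 1 := by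
  unfold gfun
  rw [Nat.cast_zero, add_zero, Nat.factorial_zero, Nat.cast_one, mul_one]
  exact div_self (Real.Gamma_pos_of_pos (hβ z)).ne'

lemma gfun_one {β : V → ℝ} (hβ : ∀ x, 0 < β x) (z : V) : gfun β z 1 = β z := by
  unfold gfun
  rw [Nat.cast_one, Real.Gamma_add_one (hβ z).ne', Nat.factorial_one, Nat.cast_one, mul_one]
  rw [mul_div_assoc, div_self (Real.Gamma_pos_of_pos (hβ z)).ne', mul_one]

lemma gfun_succ {β : V → ℝ} (hβ : ∀ x, 0 < β x) (z : V) (n : ℕ) :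
    gfun β z (n + 1) = (β z + n) / (n + 1) * gfun β z n := by
  have h1 := hβ z
  have h2 : Real.Gamma (β z) ≠ 0 := (Real.Gamma_pos_of_pos h1).ne'
  have h3 : ((n : ℝ) + 1) ≠ 0 := by positivity
  have h4 : ((Nat.factorial n : ℕ) : ℝ) ≠ 0 := by positivity
  unfold gfun
  rw [show ((n + 1 : ℕ) : ℝ) = (n : ℝ) + 1 by push_cast; ring]
  rw [show β z + ((n : ℝ) + 1) = (β z + n) + 1 by ring]
  rw [Real.Gamma_add_one (by positivity), Nat.factorial_succ]
  rw [show ((((n + 1) * Nat.factorial n : ℕ)) : ℝ) = ((n : ℝ) + 1) * (Nat.factorial n : ℝ) by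
    push_cast; ring]
  field_simp

lemma sipZ_pos [Nonempty V] {β : V → ℝ} (hβ : ∀ x, 0 < β x) (n : ℕ) : 0 < sipZ β n := by
  have h1 : 0 < ∑ x, β x := Finset.sum_pos (fun i _ => hβ i) univ_nonempty
  exact div_pos (Real.Gamma_pos_of_pos (by positivity))
    (mul_pos (Real.Gamma_pos_of_pos h1) (by positivity))

lemma sipMeasure_pos [Nonempty V] {β : V → ℝ} (hβ : ∀ x, 0 < β x) {n : ℕ}
    (η : Config V n) : 0 < sipMeasure β η := by
  rw [sipMeasure_def']
  exact mul_pos (inv_pos.2 (sipZ_pos hβ n)) (Finset.prod_pos fun z _ => gfun_pos hβ z _)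

lemma measure_simple [Nonempty V] {β : V → ℝ} (hβ : ∀ x, 0 < β x) {n : ℕ}
    {η : Config V n} (h : ∀ z, η.1 z ≤ 1) :
    sipMeasure β η = (sipZ β n)⁻¹ * ∏ z, β z ^ (η.1 z) := by
  rw [sipMeasure_def']
  congr 1
  refine Finset.prod_congr rfl fun z _ => ?_
  rcases Nat.le_one_iff_eq_zero_or_eq_one.1 (h z) with h0 | h1
  · rw [h0, gfun_zero hβ, pow_zero]
  · rw [h1, gfun_one hβ, pow_one]

lemma detailed_balance [Nonempty V] {c : V → V → ℝ} {β : V → ℝ}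
    (hβ : ∀ x, 0 < β x) (hsymm : ∀ x y, c x y = c y x) {n : ℕ}
    (η : Config V n) {x y : V} (hx : η.1 x ≠ 0) (hxy : x ≠ y) :
    sipMeasure β (η.move x y) *
      (c y x * (((η.move x y).1 y : ℕ) : ℝ) * (β x + (((η.move x y).1 x : ℕ) : ℝ))) =
    sipMeasure β η * (c x y * ((η.1 x : ℕ) : ℝ) * (β y + ((η.1 y : ℕ) : ℝ))) := by
  have hyx : y ≠ x := Ne.symm hxy
  have hymem : y ∈ univ.erase x := mem_erase.2 ⟨hyx, mem_univ y⟩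
  obtain ⟨a, ha⟩ : ∃ a, η.1 x = a + 1 := ⟨η.1 x - 1, by omega⟩
  have hmx : (η.move x y).1 x = a := by rw [move_src η hx hxy, ha]; omega
  have hmy : (η.move x y).1 y = η.1 y + 1 := move_tgt η hx hxy
  have eprod : ∀ θ : Config V n, ∏ z, gfun β z (θ.1 z) =
      gfun β x (θ.1 x) * (gfun β y (θ.1 y) *
        ∏ z ∈ (univ.erase x).erase y, gfun β z (θ.1 z)) := by
    intro θ
    rw [← Finset.mul_prod_erase univ _ (mem_univ x),
      ← Finset.mul_prod_erase (univ.erase x) _ hymem]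
  have hrest : ∏ z ∈ (univ.erase x).erase y, gfun β z ((η.move x y).1 z) =
      ∏ z ∈ (univ.erase x).erase y, gfun β z (η.1 z) := by
    refine Finset.prod_congr rfl fun z hz => ?_
    have hzy : z ≠ y := (mem_erase.1 hz).1
    have hzx : z ≠ x := (mem_erase.1 (mem_erase.1 hz).2).1
    rw [move_other η hx hzx hzy]
  rw [sipMeasure_def', sipMeasure_def', eprod (η.move x y), eprod η, hrest, hmx, hmy, ha]
  rw [gfun_succ hβ x a, gfun_succ hβ y (η.1 y), hsymm x y]
  have h2 : gfun β x a ≠ 0 := (gfun_pos hβ x a).ne'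
  have h3 : gfun β y (η.1 y) ≠ 0 := (gfun_pos hβ y _).ne'
  have h4 : ((a : ℝ) + 1) ≠ 0 := by positivity
  have h5 : ((η.1 y : ℝ) + 1) ≠ 0 := by positivity
  have hZ : sipZ β n ≠ 0 := (sipZ_pos hβ n).ne'
  push_cast
  field_simp

end SIPaux
end AuxProof2
noncomputable section AuxProof3
open Finset

namespace SIPaux

variable {V : Type*} [Fintype V] [DecidableEq V]

/-- weight of a frozen configuration. -/
def wgt (β : V → ℝ) {m : ℕ} (ρ : Config V m) : ℝ :=
  sipZ β 2 * (sipZ β (m + 2))⁻¹ * ∏ z, β z ^ (ρ.1 z)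

lemma wgt_nonneg [Nonempty V] {β : V → ℝ} (hβ : ∀ x, 0 < β x) {m : ℕ}
    (ρ : Config V m) : 0 ≤ wgt β ρ := by
  have h1 := sipZ_pos hβ 2
  have h2 := sipZ_pos hβ (m + 2)
  have h3 : (0:ℝ) < ∏ z, β z ^ (ρ.1 z) := Finset.prod_pos fun z _ => pow_pos (hβ z) _
  exact le_of_lt (mul_pos (mul_pos h1 (inv_pos.2 h2)) h3)

lemma wgt_mul_measure [Nonempty V] {β : V → ℝ} (hβ : ∀ x, 0 < β x) {m : ℕ}
    {ρ : Config V m} {ξ : Config V 2} {η : Config V (m + 2)}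
    (hη : ∀ z, η.1 z ≤ 1) (h : pairAdd ξ ρ = η) :
    wgt β ρ * sipMeasure β ξ = sipMeasure β η := by
  have happ : ∀ z, ξ.1 z + ρ.1 z = η.1 z := fun z => by
    rw [← h, pairAdd_apply]
  have hξ : ∀ z, ξ.1 z ≤ 1 := fun z => by have := happ z; have := hη z; omega
  rw [measure_simple hβ hξ, measure_simple hβ hη, wgt]
  have hZ2 : sipZ β 2 ≠ 0 := (sipZ_pos hβ 2).ne'
  have hprod : (∏ z, β z ^ (ρ.1 z)) * (∏ z, β z ^ (ξ.1 z)) = ∏ z, β z ^ (η.1 z) := by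
    rw [← Finset.prod_mul_distrib]
    exact Finset.prod_congr rfl fun z _ => by rw [← pow_add, ← happ z, Nat.add_comm]
  have halg : ∀ (Z1 Zk P Q Rr : ℝ), Z1 ≠ 0 → P * Q = Rr →
      Z1 * Zk * P * (Z1⁻¹ * Q) = Zk * Rr := by
    intro Z1 Zk P Q Rr h0 hpq
    field_simp
    linear_combination Zk * hpq
  exact halg _ _ _ _ _ hZ2 (by rw [mul_comm] at hprod ⊢; exact hprod)

lemma good_sub {c : V → V → ℝ} {m : ℕ} {ξ : Config V 2} {ρ : Config V m}
    (hg : inOmega c (pairAdd ξ ρ)) (hs : ∀ z, (pairAdd ξ ρ).1 z ≤ 1) :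
    inOmega c ξ ∧ numStacks ξ = 2 := by
  have hle : ∀ z, ξ.1 z ≤ (pairAdd ξ ρ).1 z := fun z => by
    rw [pairAdd_apply]; omega
  constructor
  · intro a b
    by_cases ha : ξ.1 a = 0
    · simp [ha]
    by_cases hb : ξ.1 b = 0
    · simp [hb]
    have hpa : (0:ℝ) < ((pairAdd ξ ρ).1 a : ℝ) := by
      have h1 := hle a
      have h2 : 0 < (pairAdd ξ ρ).1 a := by omega
      exact_mod_cast h2
    have hpb : (0:ℝ) < ((pairAdd ξ ρ).1 b : ℝ) := by
      have h1 := hle b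
      have h2 : 0 < (pairAdd ξ ρ).1 b := by omega
      exact_mod_cast h2
    have h0 := hg a b
    have hc : c a b = 0 := by
      rcases mul_eq_zero.1 h0 with h1 | h1
      · rcases mul_eq_zero.1 h1 with h2 | h2
        · exact h2
        · exact absurd h2 hpa.ne'
      · exact absurd h1 hpb.ne'
    rw [hc]; ring
  · exact numStacks_of_simple fun z => le_trans (hle z) (hs z)

/-- the generic Dirichlet-form summand, as a function of a triple. -/
def TT (c : V → V → ℝ) (β : V → ℝ) {n : ℕ} (F : Config V n → ℝ)
    (p : Config V n × V × V) : ℝ :=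
  sipMeasure β p.1 *
    (c p.2.1 p.2.2 * (p.1.1 p.2.1 : ℝ) * (β p.2.2 + (p.1.1 p.2.2 : ℝ)) *
      (F (p.1.move p.2.1 p.2.2) - F p.1) ^ 2)

lemma TT_nonneg [Nonempty V] {c : V → V → ℝ} {β : V → ℝ}
    (hβ : ∀ x, 0 < β x) (hnonneg : ∀ x y, 0 ≤ c x y) {n : ℕ}
    (F : Config V n → ℝ) (p : Config V n × V × V) : 0 ≤ TT c β F p := by
  refine mul_nonneg (sipMeasure_pos hβ _).le ?_
  refine mul_nonneg (mul_nonneg (mul_nonneg (hnonneg _ _) (Nat.cast_nonneg _)) ?_) (sq_nonneg _)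
  have := hβ p.2.2
  positivity

lemma dirichlet_eq {c : V → V → ℝ} {β : V → ℝ} {n : ℕ} (F : Config V n → ℝ) :
    dirichletForm c β F = (1 / 2) * ∑ p : Config V n × V × V, TT c β F p := by
  unfold dirichletForm
  congr 1
  rw [Fintype.sum_prod_type]
  refine Finset.sum_congr rfl fun η _ => ?_
  rw [Fintype.sum_prod_type]
  rfl

lemma TT_zero_of_zero {c : V → V → ℝ} {β : V → ℝ} {n : ℕ}
    {F : Config V n → ℝ} {p : Config V n × V × V} (h : p.1.1 p.2.1 = 0) :
    TT c β F p = 0 := by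
  unfold TT
  rw [h]
  push_cast
  ring

lemma TT_zero_of_eq {c : V → V → ℝ} {β : V → ℝ} {n : ℕ}
    {F : Config V n → ℝ} {p : Config V n × V × V} (h : p.2.1 = p.2.2) :
    TT c β F p = 0 := by
  unfold TT
  rw [← h, move_self, sub_self]
  ring

lemma TT_zero_of_vals {c : V → V → ℝ} {β : V → ℝ} {n : ℕ}
    {F : Config V n → ℝ} {p : Config V n × V × V}
    (h1 : F p.1 = 0) (h2 : F (p.1.move p.2.1 p.2.2) = 0) :
    TT c β F p = 0 := by
  unfold TT
  rw [h1, h2, sub_self]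
  ring

lemma TT_rev [Nonempty V] {c : V → V → ℝ} {β : V → ℝ}
    (hβ : ∀ x, 0 < β x) (hsymm : ∀ x y, c x y = c y x) {n : ℕ}
    (F : Config V n → ℝ) (p : Config V n × V × V)
    (hx : p.1.1 p.2.1 ≠ 0) (hxy : p.2.1 ≠ p.2.2) :
    TT c β F (p.1.move p.2.1 p.2.2, p.2.2, p.2.1) = TT c β F p := by
  obtain ⟨η, x, y⟩ := p
  simp only [TT]
  dsimp only at hx hxy ⊢
  rw [move_move η hx]
  have hdb := detailed_balance hβ hsymm η hx hxy
  linear_combination (F (η.move x y) - F η) ^ 2 * hdb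

lemma sum_split [Nonempty V] {c : V → V → ℝ} {β : V → ℝ}
    (hβ : ∀ x, 0 < β x) (hsymm : ∀ x y, c x y = c y x) {n : ℕ}
    (GG : Config V n → Prop) (HH : Config V n × V × V → Prop)
    (hHH : ∀ p : Config V n × V × V, HH p ↔ GG p.1 ∧ ¬GG (p.1.move p.2.1 p.2.2))
    (F : Config V n → ℝ) (hF : ∀ η, ¬GG η → F η = 0) :
    ∑ p : Config V n × V × V, TT c β F p =
      (∑ p : Config V n × V × V, if GG p.1 then TT c β F p else 0) +
      ∑ p : Config V n × V × V, if HH p then TT c β F p else 0 := by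
  classical
  have hsplit : ∀ p : Config V n × V × V, TT c β F p =
      (if GG p.1 then TT c β F p else 0) + (if ¬GG p.1 then TT c β F p else 0) := by
    intro p; by_cases h : GG p.1 <;> simp [h]
  rw [Finset.sum_congr rfl fun p _ => hsplit p, Finset.sum_add_distrib]
  congr 1
  have key1 : ∀ p : Config V n × V × V, (if ¬GG p.1 then TT c β F p else 0) =
      (if ¬GG p.1 ∧ GG (p.1.move p.2.1 p.2.2) ∧ p.1.1 p.2.1 ≠ 0 ∧ p.2.1 ≠ p.2.2
        then TT c β F p else 0) := by
    intro p
    by_cases h1 : GG p.1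
    · simp [h1]
    by_cases h2 : p.1.1 p.2.1 = 0
    · rw [TT_zero_of_zero h2]; simp
    by_cases h3 : p.2.1 = p.2.2
    · rw [TT_zero_of_eq h3]; simp
    by_cases h4 : GG (p.1.move p.2.1 p.2.2)
    · simp [h1, h2, h3, h4]
    · rw [TT_zero_of_vals (hF _ h1) (hF _ h4)]; simp
  have key2 : ∀ p : Config V n × V × V,
      (if HH p then TT c β F p else 0) =
      (if GG p.1 ∧ ¬GG (p.1.move p.2.1 p.2.2) ∧ p.1.1 p.2.1 ≠ 0 ∧ p.2.1 ≠ p.2.2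
        then TT c β F p else 0) := by
    intro p
    by_cases h2 : p.1.1 p.2.1 = 0
    · rw [TT_zero_of_zero h2]; simp
    by_cases h3 : p.2.1 = p.2.2
    · rw [TT_zero_of_eq h3]; simp
    by_cases h1 : GG p.1 <;> by_cases h4 : GG (p.1.move p.2.1 p.2.2) <;>
      simp [hHH p, h1, h2, h3, h4]
  rw [Finset.sum_congr rfl fun p _ => key1 p, Finset.sum_congr rfl fun p _ => key2 p]
  rw [← Finset.sum_filter, ← Finset.sum_filter]
  refine Finset.sum_nbij' (fun p => (p.1.move p.2.1 p.2.2, p.2.2, p.2.1))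
    (fun p => (p.1.move p.2.1 p.2.2, p.2.2, p.2.1)) ?_ ?_ ?_ ?_ ?_
  · intro p hp
    obtain ⟨h1, h4, h2, h3⟩ := (mem_filter.1 hp).2
    refine mem_filter.2 ⟨mem_univ _, h4, ?_, ?_, Ne.symm h3⟩
    · rw [move_move p.1 h2]; exact h1
    · rw [move_tgt p.1 h2 h3]; omega
  · intro p hp
    obtain ⟨h1, h4, h2, h3⟩ := (mem_filter.1 hp).2
    refine mem_filter.2 ⟨mem_univ _, h4, ?_, ?_, Ne.symm h3⟩
    · rw [move_move p.1 h2]; exact h1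
    · rw [move_tgt p.1 h2 h3]; omega
  · intro p hp
    obtain ⟨h1, h4, h2, h3⟩ := (mem_filter.1 hp).2
    ext : 1
    · exact move_move p.1 h2
    · rfl
  · intro p hp
    obtain ⟨h1, h4, h2, h3⟩ := (mem_filter.1 hp).2
    ext : 1
    · exact move_move p.1 h2
    · rfl
  · intro p hp
    obtain ⟨h1, h4, h2, h3⟩ := (mem_filter.1 hp).2
    exact (TT_rev hβ hsymm F p h2 h3).symm

end SIPaux
end AuxProof3
noncomputable section AuxProof4
open Finset

namespace SIPaux

variable {V : Type*} [Fintype V] [DecidableEq V]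

/-- the two-particle configuration `δ_x + δ_v`. -/
def pairCfg (x v : V) : Config V 2 :=
  ⟨fun z => (if z = x then 1 else 0) + (if z = v then 1 else 0), by
    rw [Finset.sum_add_distrib]
    simp [Finset.sum_ite_eq']⟩

lemma pairCfg_apply (x v z : V) :
    (pairCfg x v).1 z = (if z = x then 1 else 0) + (if z = v then 1 else 0) := rfl

/-- `η` minus the pair `δ_x + δ_v` (junk value if not possible). -/
def restCfg [Nonempty V] {m : ℕ} (η : Config V (m + 2)) (x v : V) : Config V m :=
  if h : ∀ z, (pairCfg x v).1 z ≤ η.1 z then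
    ⟨fun z => η.1 z - (pairCfg x v).1 z, by
      rw [Finset.sum_tsub_distrib _ (fun z _ => h z), η.2, (pairCfg x v).2]
      omega⟩
  else stackConfig V m (Classical.arbitrary V)

lemma restCfg_apply [Nonempty V] {m : ℕ} (η : Config V (m + 2)) (x v : V)
    (h : ∀ z, (pairCfg x v).1 z ≤ η.1 z) (z : V) :
    (restCfg η x v).1 z = η.1 z - (pairCfg x v).1 z := by
  exact congrArg (fun θ : Config V m => θ.1 z) (dif_pos h : restCfg η x v = _)

lemma card_fiber [Nonempty V] {m : ℕ} {η : Config V (m + 2)}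
    (hs : ∀ z, η.1 z ≤ 1) (hst : numStacks η = m + 2) {x : V} (hx : η.1 x = 1) :
    (((univ.filter fun z : Config V m × Config V 2 => pairAdd z.2 z.1 = η)).filter
      (fun z => z.2.1 x = 1)).card = m + 1 := by
  classical
  rw [Finset.filter_filter]
  set Sx : Finset V := (univ.filter fun v => 0 < η.1 v).erase x with hSx
  have hxmem : x ∈ univ.filter fun v => 0 < η.1 v := mem_filter.2 ⟨mem_univ _, by omega⟩
  have hcard : Sx.card = m + 1 := by
    rw [hSx, Finset.card_erase_of_mem hxmem]
    have : (univ.filter fun v => 0 < η.1 v).card = m + 2 := hst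
    omega
  rw [← hcard]
  refine (Finset.card_bij (fun v _ => (restCfg η x v, pairCfg x v)) ?_ ?_ ?_).symm
  · -- maps into the fiber
    intro v hv
    have hvx : v ≠ x := (Finset.mem_erase.1 hv).1
    have hvpos : 0 < η.1 v := (mem_filter.1 (Finset.mem_erase.1 hv).2).2
    have hle : ∀ z, (pairCfg x v).1 z ≤ η.1 z := by
      intro z
      rw [pairCfg_apply]
      by_cases hzx : z = x
      · subst hzx
        rw [if_pos rfl, if_neg (Ne.symm hvx)]
        omega
      · by_cases hzv : z = v
        · subst hzv
          rw [if_neg hzx, if_pos rfl]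
          omega
        · rw [if_neg hzx, if_neg hzv]
          omega
    refine mem_filter.2 ⟨mem_univ _, ?_, ?_⟩
    · dsimp only
      apply cfg_ext
      intro z
      rw [pairAdd_apply, restCfg_apply η x v hle z]
      have := hle z
      omega
    · dsimp only
      rw [pairCfg_apply, if_pos rfl, if_neg (Ne.symm hvx)]
  · -- injective
    intro v hv w hw hvw
    rw [Prod.mk.injEq] at hvw
    have hvx : v ≠ x := (Finset.mem_erase.1 hv).1
    have h2 : (pairCfg x v).1 v = (pairCfg x w).1 v := by
      rw [hvw.2]
    rw [pairCfg_apply, pairCfg_apply, if_neg hvx, if_pos rfl] at h2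
    by_cases hvw' : v = w
    · exact hvw'
    · rw [if_neg hvw'] at h2; omega
  · -- surjective
    rintro ⟨ρ, ξ⟩ hb
    obtain ⟨-, hpair, hξx⟩ := mem_filter.1 hb
    dsimp only at hpair hξx
    have happ : ∀ z, ξ.1 z + ρ.1 z = η.1 z := fun z => by rw [← hpair, pairAdd_apply]
    have hξle : ∀ z, ξ.1 z ≤ 1 := fun z => by have := happ z; have := hs z; omega
    have hsum2 : ξ.1 x + ∑ z ∈ univ.erase x, ξ.1 z = 2 := by
      rw [Finset.add_sum_erase _ _ (mem_univ x)]; exact ξ.2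
    have hsum1 : ∑ z ∈ univ.erase x, ξ.1 z = 1 := by omega
    have hex : ∃ v ∈ univ.erase x, ξ.1 v ≠ 0 := by
      by_contra hcon
      push_neg at hcon
      rw [Finset.sum_eq_zero hcon] at hsum1
      omega
    obtain ⟨v, hv, hξv0⟩ := hex
    have hvx : v ≠ x := (Finset.mem_erase.1 hv).1
    have hξv : ξ.1 v = 1 := by have := hξle v; omega
    have hsum0 : ∑ z ∈ (univ.erase x).erase v, ξ.1 z = 0 := by
      have := Finset.add_sum_erase _ ξ.1 hv
      omega
    have hrest0 : ∀ z, z ≠ x → z ≠ v → ξ.1 z = 0 := by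
      intro z hzx hzv
      have hzmem : z ∈ (univ.erase x).erase v :=
        Finset.mem_erase.2 ⟨hzv, Finset.mem_erase.2 ⟨hzx, mem_univ _⟩⟩
      exact (Finset.sum_eq_zero_iff.1 hsum0) z hzmem
    have hξeq : ξ = pairCfg x v := by
      apply cfg_ext
      intro z
      rw [pairCfg_apply]
      by_cases hzx : z = x
      · subst hzx
        rw [if_pos rfl, if_neg (Ne.symm hvx), hξx]
      · by_cases hzv : z = v
        · subst hzv
          rw [if_neg hzx, if_pos rfl, hξv]
        · rw [if_neg hzx, if_neg hzv, hrest0 z hzx hzv]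
    have hle : ∀ z, (pairCfg x v).1 z ≤ η.1 z := by
      intro z
      have := happ z
      rw [hξeq] at this
      omega
    have hρeq : ρ = restCfg η x v := by
      apply cfg_ext
      intro z
      rw [restCfg_apply η x v hle z]
      have h1 := happ z
      rw [hξeq] at h1
      omega
    refine ⟨v, Finset.mem_erase.2 ⟨hvx, mem_filter.2 ⟨mem_univ _, ?_⟩⟩, ?_⟩
    · have := happ v; omega
    · rw [hρeq, hξeq]

end SIPaux
end AuxProof4
noncomputable section AuxProof5
open Finset

namespace SIPaux

variable {V : Type*} [Fintype V] [DecidableEq V]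

lemma fib_core [Nonempty V] {c : V → V → ℝ} {β : V → ℝ} (hβ : ∀ x, 0 < β x)
    (hnonneg : ∀ x y, 0 ≤ c x y) {m : ℕ} (f : Config V (m + 2) → ℝ)
    (C : Config V (m + 2) × V × V → Prop) (C₂ : Config V m → Config V 2 × V × V → Prop)
    (hC_good : ∀ q : Config V (m + 2) × V × V, C q → inOmega c q.1 ∧ numStacks q.1 = m + 2)
    (hCC : ∀ ρ (p : Config V 2 × V × V), p.1.1 p.2.1 ≠ 0 →
      (C₂ ρ p ↔ C (pairAdd p.1 ρ, p.2)))
    (v : V × V) :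
    ∑ ρ : Config V m, ∑ ξ : Config V 2,
      (if C₂ ρ (ξ, v)
        then wgt β ρ * TT c β (fun ζ => f (pairAdd ζ ρ)) (ξ, v) else 0)
    ≤ (m + 1 : ℝ) * ∑ η : Config V (m + 2),
        (if C (η, v) then TT c β f (η, v) else 0) := by
  classical
  obtain ⟨x, y⟩ := v
  rw [← Finset.sum_product', Finset.univ_product_univ, Finset.mul_sum]
  rw [← Finset.sum_fiberwise_of_maps_to (t := (univ : Finset (Config V (m + 2))))
    (g := fun z : Config V m × Config V 2 => pairAdd z.2 z.1)
    (fun z _ => Finset.mem_univ _)]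
  refine Finset.sum_le_sum fun η _ => ?_
  by_cases hG : C (η, x, y)
  · have hGood := hC_good (η, x, y) hG
    dsimp only at hGood
    have hns := hGood.2
    have hsimple := simple_of_numStacks hns
    have hTnn : 0 ≤ TT c β f (η, x, y) := TT_nonneg hβ hnonneg f _
    rw [if_pos hG]
    have step1 : ∑ z ∈ univ.filter
          (fun z : Config V m × Config V 2 => pairAdd z.2 z.1 = η),
          (if C₂ z.1 (z.2, x, y)
            then wgt β z.1 * TT c β (fun ζ => f (pairAdd ζ z.1)) (z.2, x, y) else 0)
        ≤ ∑ z ∈ univ.filter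
          (fun z : Config V m × Config V 2 => pairAdd z.2 z.1 = η),
          (if z.2.1 x = 1 then TT c β f (η, x, y) else 0) := by
      refine Finset.sum_le_sum fun z hz => ?_
      have hzfib : pairAdd z.2 z.1 = η := (Finset.mem_filter.1 hz).2
      have happ : ∀ w, z.2.1 w + z.1.1 w = η.1 w := fun w => by
        rw [← hzfib, pairAdd_apply]
      by_cases h1 : z.2.1 x = 1
      · rw [if_pos h1]
        split_ifs with hcond
        · have hx0 : z.2.1 x ≠ 0 := by omega
          have hmv : pairAdd (z.2.move x y) z.1 = η.move x y := by
            rw [pairAdd_move z.2 z.1 hx0 y, hzfib]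
          have hwm : wgt β z.1 * sipMeasure β z.2 = sipMeasure β η :=
            wgt_mul_measure hβ hsimple hzfib
          have hηx : η.1 x = 1 := by have h2 := happ x; have h3 := hsimple x; omega
          have hξy : z.2.1 y ≤ η.1 y := by have h2 := happ y; omega
          unfold TT
          dsimp only
          rw [hmv, hzfib, h1, hηx]
          rw [show wgt β z.1 * (sipMeasure β z.2 *
              (c x y * ((1:ℕ):ℝ) * (β y + (z.2.1 y : ℝ)) * (f (η.move x y) - f η) ^ 2)) =
            (wgt β z.1 * sipMeasure β z.2) *
              (c x y * ((1:ℕ):ℝ) * (β y + (z.2.1 y : ℝ)) * (f (η.move x y) - f η) ^ 2)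
            from by ring, hwm]
          have hμ : 0 ≤ sipMeasure β η := (sipMeasure_pos hβ η).le
          have hc : 0 ≤ c x y := hnonneg x y
          have hcast : (z.2.1 y : ℝ) ≤ (η.1 y : ℝ) := by exact_mod_cast hξy
          gcongr
        · exact hTnn
      · rw [if_neg h1]
        have hx0 : z.2.1 x = 0 := by have h2 := happ x; have h3 := hsimple x; omega
        have hTz : TT c β (fun ζ => f (pairAdd ζ z.1)) (z.2, x, y) = 0 :=
          TT_zero_of_zero hx0
        rw [hTz]
        simp
    refine le_trans step1 ?_
    rw [← Finset.sum_filter, Finset.sum_const, nsmul_eq_mul]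
    by_cases hηx : η.1 x = 1
    · rw [card_fiber hsimple hns hηx]
      push_cast
      exact le_refl _
    · have hcard0 : (((univ.filter fun z : Config V m × Config V 2 =>
          pairAdd z.2 z.1 = η)).filter fun z => z.2.1 x = 1).card = 0 := by
        rw [Finset.card_eq_zero, Finset.filter_eq_empty_iff]
        intro z hz hx1
        have hzfib : pairAdd z.2 z.1 = η := (Finset.mem_filter.1 hz).2
        have h2 : z.2.1 x + z.1.1 x = η.1 x := by rw [← hzfib, pairAdd_apply]
        have h3 := hsimple x
        omega
      rw [hcard0]
      push_cast
      rw [zero_mul]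
      have : (0:ℝ) ≤ (m:ℝ) + 1 := by positivity
      exact mul_nonneg this hTnn
  · rw [if_neg hG, mul_zero]
    refine le_of_eq (Finset.sum_eq_zero fun z hz => ?_)
    have hzfib : pairAdd z.2 z.1 = η := (Finset.mem_filter.1 hz).2
    by_cases hx0 : z.2.1 x = 0
    · have hTz : TT c β (fun ζ => f (pairAdd ζ z.1)) (z.2, x, y) = 0 :=
        TT_zero_of_zero hx0
      rw [hTz]
      simp
    · have hiff := hCC z.1 (z.2, x, y) hx0
      rw [hzfib] at hiff
      refine if_neg fun hcon => hG (hiff.1 hcon)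

private lemma comm3 {A B C : Type*} [Fintype A] [Fintype B] [Fintype C]
    (F : A → B → C → ℝ) :
    ∑ a : A, ∑ b : B, ∑ c : C, F a b c = ∑ c : C, ∑ a : A, ∑ b : B, F a b c := by
  calc ∑ a : A, ∑ b : B, ∑ c : C, F a b c
      = ∑ a : A, ∑ c : C, ∑ b : B, F a b c :=
        Finset.sum_congr rfl fun a _ => Finset.sum_comm
    _ = ∑ c : C, ∑ a : A, ∑ b : B, F a b c := Finset.sum_comm

lemma fibcomp [Nonempty V] {c : V → V → ℝ} {β : V → ℝ} (hβ : ∀ x, 0 < β x)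
    (hnonneg : ∀ x y, 0 ≤ c x y) {m : ℕ} (f : Config V (m + 2) → ℝ)
    (C : Config V (m + 2) × V × V → Prop) (C₂ : Config V m → Config V 2 × V × V → Prop)
    (hC_good : ∀ q : Config V (m + 2) × V × V, C q → inOmega c q.1 ∧ numStacks q.1 = m + 2)
    (hCC : ∀ ρ (p : Config V 2 × V × V), p.1.1 p.2.1 ≠ 0 →
      (C₂ ρ p ↔ C (pairAdd p.1 ρ, p.2))) :
    ∑ ρ : Config V m, wgt β ρ * ∑ p : Config V 2 × V × V,
      (if C₂ ρ p then TT c β (fun ξ => f (pairAdd ξ ρ)) p else 0)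
    ≤ (m + 1 : ℝ) * ∑ q : Config V (m + 2) × V × V,
        (if C q then TT c β f q else 0) := by
  classical
  have L1 : ∀ ρ : Config V m, wgt β ρ * ∑ p : Config V 2 × V × V,
      (if C₂ ρ p then TT c β (fun ξ => f (pairAdd ξ ρ)) p else 0)
      = ∑ ξ : Config V 2, ∑ v : V × V,
        (if C₂ ρ (ξ, v)
          then wgt β ρ * TT c β (fun ζ => f (pairAdd ζ ρ)) (ξ, v) else 0) := by
    intro ρ
    rw [Finset.mul_sum, Fintype.sum_prod_type]
    exact Finset.sum_congr rfl fun ξ _ => Finset.sum_congr rfl fun v _ => by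
      rw [mul_ite, mul_zero]
  rw [Finset.sum_congr rfl fun ρ _ => L1 ρ, comm3]
  conv_rhs => rw [Fintype.sum_prod_type, Finset.sum_comm, Finset.mul_sum]
  exact Finset.sum_le_sum fun v _ => fib_core hβ hnonneg f C C₂ hC_good hCC v

lemma fibnorm [Nonempty V] {c : V → V → ℝ} {β : V → ℝ} (hβ : ∀ x, 0 < β x)
    {m : ℕ} (f : Config V (m + 2) → ℝ)
    (hsupp : ∀ η, ¬(inOmega c η ∧ numStacks η = m + 2) → f η = 0) :
    (m + 1 : ℝ) * ∑ η : Config V (m + 2), sipMeasure β η * f η ^ 2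
      ≤ ∑ ρ : Config V m, wgt β ρ *
          ∑ ξ : Config V 2, sipMeasure β ξ * f (pairAdd ξ ρ) ^ 2 := by
  classical
  rw [Finset.sum_congr rfl fun ρ (_ : ρ ∈ univ) => Finset.mul_sum _ _ _]
  rw [← Finset.sum_product', Finset.univ_product_univ]
  rw [← Finset.sum_fiberwise_of_maps_to (t := (univ : Finset (Config V (m + 2))))
    (g := fun z : Config V m × Config V 2 => pairAdd z.2 z.1)
    (fun z _ => Finset.mem_univ _), Finset.mul_sum]
  refine Finset.sum_le_sum fun η _ => ?_
  have hterm_nonneg : ∀ z : Config V m × Config V 2,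
      0 ≤ wgt β z.1 * (sipMeasure β z.2 * f (pairAdd z.2 z.1) ^ 2) :=
    fun z => mul_nonneg (wgt_nonneg hβ z.1)
      (mul_nonneg (sipMeasure_pos hβ z.2).le (sq_nonneg _))
  by_cases hf : f η = 0
  · rw [hf]
    rw [show (m + 1 : ℝ) * (sipMeasure β η * (0:ℝ) ^ 2) = 0 from by ring]
    exact Finset.sum_nonneg fun z _ => hterm_nonneg z
  · have hGood : inOmega c η ∧ numStacks η = m + 2 := by
      by_contra hcon
      exact hf (hsupp η hcon)
    have hsimple := simple_of_numStacks hGood.2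
    have hpos : 0 < (univ.filter fun w => 0 < η.1 w).card := by
      have h2 : (univ.filter fun w => 0 < η.1 w).card = m + 2 := hGood.2
      omega
    obtain ⟨x, hxmem⟩ := Finset.card_pos.1 hpos
    have hx : η.1 x = 1 := by
      have h2 := (mem_filter.1 hxmem).2
      have h3 := hsimple x
      omega
    calc (m + 1 : ℝ) * (sipMeasure β η * f η ^ 2)
        = ((((univ.filter fun z : Config V m × Config V 2 => pairAdd z.2 z.1 = η)).filter
            fun z => z.2.1 x = 1).card : ℝ) * (sipMeasure β η * f η ^ 2) := by
          rw [card_fiber hsimple hGood.2 hx]; push_cast; ring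
      _ = ∑ _z ∈ ((univ.filter fun z : Config V m × Config V 2 =>
            pairAdd z.2 z.1 = η)).filter (fun z => z.2.1 x = 1),
            sipMeasure β η * f η ^ 2 := by
          rw [Finset.sum_const, nsmul_eq_mul]
      _ = ∑ z ∈ ((univ.filter fun z : Config V m × Config V 2 =>
            pairAdd z.2 z.1 = η)).filter (fun z => z.2.1 x = 1),
            wgt β z.1 * (sipMeasure β z.2 * f (pairAdd z.2 z.1) ^ 2) := by
          refine Finset.sum_congr rfl fun z hz => ?_
          have hzfib : pairAdd z.2 z.1 = η := (mem_filter.1 (mem_filter.1 hz).1).2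
          rw [hzfib, ← wgt_mul_measure hβ hsimple hzfib]
          ring
      _ ≤ ∑ z ∈ (univ.filter fun z : Config V m × Config V 2 => pairAdd z.2 z.1 = η),
            wgt β z.1 * (sipMeasure β z.2 * f (pairAdd z.2 z.1) ^ 2) :=
          Finset.sum_le_sum_of_subset_of_nonneg (Finset.filter_subset _ _)
            (fun z _ _ => hterm_nonneg z)

end SIPaux
end AuxProof5
noncomputable section AuxProof6
open Finset

namespace SIPaux

variable {V : Type*} [Fintype V] [DecidableEq V]

lemma dirichlet_nonneg [Nonempty V] {c : V → V → ℝ} {β : V → ℝ}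
    (hβ : ∀ x, 0 < β x) (hnonneg : ∀ x y, 0 ≤ c x y) {n : ℕ}
    (F : Config V n → ℝ) : 0 ≤ dirichletForm c β F := by
  rw [dirichlet_eq]
  exact mul_nonneg (by norm_num)
    (Finset.sum_nonneg fun p _ => TT_nonneg hβ hnonneg F p)

lemma normSq_nonneg [Nonempty V] {β : V → ℝ} (hβ : ∀ x, 0 < β x) {n : ℕ}
    (F : Config V n → ℝ) : 0 ≤ sipNormSq β F :=
  Finset.sum_nonneg fun η _ =>
    mul_nonneg (sipMeasure_pos hβ η).le (sq_nonneg _)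

lemma normSq_pos [Nonempty V] {β : V → ℝ} (hβ : ∀ x, 0 < β x) {n : ℕ}
    {F : Config V n → ℝ} (hF : F ≠ 0) : 0 < sipNormSq β F := by
  obtain ⟨η, hη⟩ : ∃ η, F η ≠ 0 := by
    by_contra hcon
    push_neg at hcon
    exact hF (funext hcon)
  refine Finset.sum_pos' (fun ζ _ => mul_nonneg (sipMeasure_pos hβ ζ).le (sq_nonneg _))
    ⟨η, Finset.mem_univ η, ?_⟩
  have h1 : 0 < F η ^ 2 := by positivity
  exact mul_pos (sipMeasure_pos hβ η) h1

lemma lamLevel2_nonneg [Nonempty V] {c : V → V → ℝ} {β : V → ℝ}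
    (hβ : ∀ x, 0 < β x) (hnonneg : ∀ x y, 0 ≤ c x y) :
    0 ≤ lamLevel c β 2 := by
  refine Real.sInf_nonneg fun r hr => ?_
  obtain ⟨f, hf0, -, rfl⟩ := hr
  exact div_nonneg (dirichlet_nonneg hβ hnonneg f) (normSq_nonneg hβ f)

lemma lamLevel2_bddBelow {c : V → V → ℝ} {β : V → ℝ} [Nonempty V]
    (hβ : ∀ x, 0 < β x) (hnonneg : ∀ x y, 0 ≤ c x y) :
    BddBelow {r : ℝ | ∃ f : Config V 2 → ℝ, f ≠ 0 ∧
      (∀ η : Config V 2, ¬(inOmega c η ∧ numStacks η = 2) → f η = 0) ∧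
      r = dirichletForm c β f / sipNormSq β f} := by
  refine ⟨0, fun r hr => ?_⟩
  obtain ⟨f, hf0, -, rfl⟩ := hr
  exact div_nonneg (dirichlet_nonneg hβ hnonneg f) (normSq_nonneg hβ f)

lemma main_step [Nonempty V] {c : V → V → ℝ} {β : V → ℝ}
    (hβ : ∀ x, 0 < β x) (hsymm : ∀ x y, c x y = c y x)
    (hnonneg : ∀ x y, 0 ≤ c x y) {m : ℕ} (f : Config V (m + 2) → ℝ)
    (hsupp : ∀ η, ¬(inOmega c η ∧ numStacks η = m + 2) → f η = 0) :
    lamLevel c β 2 * sipNormSq β f ≤ dirichletForm c β f := by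
  classical
  set lam2 := lamLevel c β 2 with hlam2
  have hlam0 : 0 ≤ lam2 := lamLevel2_nonneg hβ hnonneg
  set g : Config V m → Config V 2 → ℝ := fun ρ ξ => f (pairAdd ξ ρ) with hg
  -- step (C): per-ρ spectral bound
  have key2 : ∀ ρ : Config V m, lam2 * sipNormSq β (g ρ) ≤ dirichletForm c β (g ρ) := by
    intro ρ
    by_cases hgz : g ρ = 0
    · have hN : sipNormSq β (g ρ) = 0 := by
        refine Finset.sum_eq_zero fun ξ _ => ?_
        have : g ρ ξ = 0 := by rw [hgz]; rfl
        rw [this]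
        ring
      have hE : dirichletForm c β (g ρ) = 0 := by
        rw [dirichlet_eq]
        rw [Finset.sum_eq_zero fun p (_ : p ∈ univ) => TT_zero_of_vals
          (by rw [hgz]; rfl) (by rw [hgz]; rfl)]
        ring
      rw [hN, hE, mul_zero]
    · have hsupp2 : ∀ ξ : Config V 2, ¬(inOmega c ξ ∧ numStacks ξ = 2) → g ρ ξ = 0 := by
        intro ξ hbad
        show f (pairAdd ξ ρ) = 0
        apply hsupp
        intro hcon
        exact hbad (good_sub hcon.1 (simple_of_numStacks hcon.2))
      have hmem : dirichletForm c β (g ρ) / sipNormSq β (g ρ) ∈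
          {r : ℝ | ∃ F : Config V 2 → ℝ, F ≠ 0 ∧
            (∀ η : Config V 2, ¬(inOmega c η ∧ numStacks η = 2) → F η = 0) ∧
            r = dirichletForm c β F / sipNormSq β F} :=
        ⟨g ρ, hgz, hsupp2, rfl⟩
      have hle : lam2 ≤ dirichletForm c β (g ρ) / sipNormSq β (g ρ) :=
        csInf_le (lamLevel2_bddBelow hβ hnonneg) hmem
      have hNpos : 0 < sipNormSq β (g ρ) := normSq_pos hβ hgz
      calc lam2 * sipNormSq β (g ρ)
          ≤ (dirichletForm c β (g ρ) / sipNormSq β (g ρ)) * sipNormSq β (g ρ) :=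
            mul_le_mul_of_nonneg_right hle hNpos.le
        _ = dirichletForm c β (g ρ) := by field_simp
  -- step (A): norm comparison
  have key1 : (m + 1 : ℝ) * sipNormSq β f ≤ ∑ ρ : Config V m, wgt β ρ * sipNormSq β (g ρ) :=
    fibnorm hβ f hsupp
  -- step (B): Dirichlet comparison
  have key3 : ∑ ρ : Config V m, wgt β ρ * dirichletForm c β (g ρ)
      ≤ (m + 1 : ℝ) * dirichletForm c β f := by
    have hsplit_f := sum_split hβ hsymm
      (fun η : Config V (m + 2) => inOmega c η ∧ numStacks η = m + 2)
      (fun q : Config V (m + 2) × V × V =>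
        (inOmega c q.1 ∧ numStacks q.1 = m + 2) ∧
          ¬(inOmega c (q.1.move q.2.1 q.2.2) ∧ numStacks (q.1.move q.2.1 q.2.2) = m + 2))
      (fun p => Iff.rfl) f hsupp
    have hsplit_g := fun ρ : Config V m => sum_split hβ hsymm
      (fun ξ : Config V 2 => inOmega c (pairAdd ξ ρ) ∧ numStacks (pairAdd ξ ρ) = m + 2)
      (fun p : Config V 2 × V × V =>
        (inOmega c (pairAdd p.1 ρ) ∧ numStacks (pairAdd p.1 ρ) = m + 2) ∧
          ¬(inOmega c (pairAdd (p.1.move p.2.1 p.2.2) ρ) ∧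
            numStacks (pairAdd (p.1.move p.2.1 p.2.2) ρ) = m + 2))
      (fun p => Iff.rfl) (g ρ) (fun ξ h => hsupp _ h)
    have hcomp1 := fibcomp hβ hnonneg f
      (fun q : Config V (m + 2) × V × V => inOmega c q.1 ∧ numStacks q.1 = m + 2)
      (fun (ρ : Config V m) (p : Config V 2 × V × V) =>
        inOmega c (pairAdd p.1 ρ) ∧ numStacks (pairAdd p.1 ρ) = m + 2)
      (fun q hq => hq) (fun ρ p _ => Iff.rfl)
    have hcomp2 := fibcomp hβ hnonneg f
      (fun q : Config V (m + 2) × V × V =>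
        (inOmega c q.1 ∧ numStacks q.1 = m + 2) ∧
          ¬(inOmega c (q.1.move q.2.1 q.2.2) ∧ numStacks (q.1.move q.2.1 q.2.2) = m + 2))
      (fun (ρ : Config V m) (p : Config V 2 × V × V) =>
        (inOmega c (pairAdd p.1 ρ) ∧ numStacks (pairAdd p.1 ρ) = m + 2) ∧
          ¬(inOmega c (pairAdd (p.1.move p.2.1 p.2.2) ρ) ∧
            numStacks (pairAdd (p.1.move p.2.1 p.2.2) ρ) = m + 2))
      (fun q hq => hq.1) (fun ρ p hp => by dsimp only; rw [pairAdd_move p.1 ρ hp])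
    have hsum : ∑ ρ : Config V m, wgt β ρ * (2 * dirichletForm c β (g ρ))
        ≤ (m + 1 : ℝ) * (2 * dirichletForm c β f) := by
      have e2 : (2:ℝ) * dirichletForm c β f = ∑ q : Config V (m + 2) × V × V, TT c β f q := by
        rw [dirichlet_eq (c := c) (β := β) f]; ring
      have e1 : ∀ ρ : Config V m, wgt β ρ * (2 * dirichletForm c β (g ρ)) =
          wgt β ρ * ∑ p : Config V 2 × V × V, TT c β (g ρ) p := fun ρ => by
        rw [dirichlet_eq (c := c) (β := β) (g ρ)]; ring
      rw [Finset.sum_congr rfl fun ρ _ => e1 ρ, e2, hsplit_f, mul_add]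
      rw [Finset.sum_congr rfl fun ρ (_ : ρ ∈ univ) =>
        (congrArg (fun t => wgt β ρ * t) (hsplit_g ρ)).trans (mul_add (wgt β ρ) _ _)]
      rw [Finset.sum_add_distrib]
      exact add_le_add hcomp1 hcomp2
    have hexp : ∑ ρ : Config V m, wgt β ρ * (2 * dirichletForm c β (g ρ)) =
        2 * ∑ ρ : Config V m, wgt β ρ * dirichletForm c β (g ρ) := by
      rw [Finset.mul_sum]
      exact Finset.sum_congr rfl fun ρ _ => by ring
    rw [hexp] at hsum
    linarith
  -- final chain
  have chain1 : lam2 * ((m + 1 : ℝ) * sipNormSq β f)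
      ≤ lam2 * ∑ ρ : Config V m, wgt β ρ * sipNormSq β (g ρ) :=
    mul_le_mul_of_nonneg_left key1 hlam0
  have chain2 : lam2 * ∑ ρ : Config V m, wgt β ρ * sipNormSq β (g ρ)
      ≤ ∑ ρ : Config V m, wgt β ρ * dirichletForm c β (g ρ) := by
    rw [Finset.mul_sum]
    refine Finset.sum_le_sum fun ρ _ => ?_
    have h1 : lam2 * (wgt β ρ * sipNormSq β (g ρ)) =
        wgt β ρ * (lam2 * sipNormSq β (g ρ)) := by ring
    rw [h1]
    exact mul_le_mul_of_nonneg_left (key2 ρ) (wgt_nonneg hβ ρ)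
  have hfinal : (m + 1 : ℝ) * (lam2 * sipNormSq β f) ≤
      (m + 1 : ℝ) * dirichletForm c β f := by
    calc (m + 1 : ℝ) * (lam2 * sipNormSq β f)
        = lam2 * ((m + 1 : ℝ) * sipNormSq β f) := by ring
      _ ≤ ∑ ρ : Config V m, wgt β ρ * dirichletForm c β (g ρ) :=
          le_trans chain1 chain2
      _ ≤ (m + 1 : ℝ) * dirichletForm c β f := key3
  have hmpos : (0 : ℝ) < (m + 1 : ℝ) := by positivity
  exact le_of_mul_le_mul_left hfinal hmpos

end SIPaux
end AuxProof6

theorem lamLevel_monotone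
    {V : Type*} [Fintype V] [DecidableEq V] (c : V → V → ℝ) (β : V → ℝ)
    (hsymm : ∀ x y, c x y = c y x) (hnonneg : ∀ x y, 0 ≤ c x y)
    (hloop : ∀ x, c x x = 0) (hconn : (graphOf c).Connected)
    (hβ : ∀ x, 0 < β x) (k : ℕ) (hk : 2 ≤ k)
    (hne : ∃ η : Config V k, inOmega c η ∧ numStacks η = k) :
    lamLevel c β 2 ≤ lamLevel c β k := by
  classical
  obtain ⟨m, rfl⟩ : ∃ m, k = m + 2 := ⟨k - 2, by omega⟩
  haveI hVne : Nonempty V := by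
    obtain ⟨η, -⟩ := hne
    rcases isEmpty_or_nonempty V with hV | hV
    · exfalso
      have h2 := η.2
      simp at h2
    · exact hV
  obtain ⟨η₀, hη₀⟩ := hne
  refine le_csInf ⟨dirichletForm c β (fun η => if η = η₀ then (1:ℝ) else 0) /
      sipNormSq β (fun η => if η = η₀ then (1:ℝ) else 0), ?_⟩ ?_
  · refine ⟨fun η => if η = η₀ then (1:ℝ) else 0, ?_, ?_, rfl⟩
    · intro h
      have h2 := congrFun h η₀
      simp at h2
    · intro η hη
      by_cases h : η = η₀
      · exact absurd (h ▸ hη₀) hη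
      · exact if_neg h
  · rintro b ⟨f, hf0, hsupp, rfl⟩
    have hN : 0 < sipNormSq β f := SIPaux.normSq_pos hβ hf0
    rw [le_div_iff₀ hN]
    exact SIPaux.main_step hβ hsymm hnonneg f hsupp
end
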